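/- arXiv:1204.0734 — 9 statements merged into one kernel-verified Lean document; each statement's English description precedes it below -/
import Mathlib

section
/- Let G = ([n], E) be a graph and let a be a G-partial matrix (a vector in R^{V∪E} specifying diagonal entries and entries on edges). If a admits a completion to a positive semidefinite n×n matrix, then it admits a positive semidefinite completion of rank at most ⌊(√(1+8(|V|+|E|)) − 1)/2⌋. -/
/-!
Barvinok–Pataki rank reduction. Write a psd completion of rank `r` as `X = Bᵀ B` with `r` rows.
If `C(r + 1, 2) > |V| + |E|`, a dimension count over the symmetric `r × r` matrices gives
`M ≠ 0` with `Bᵀ M B` vanishing on the diagonal and on the edges. Scaling `M` so that the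
eigenvalue of largest modulus becomes `-1`, the matrix `1 + c M` is psd and singular, and
`Bᵀ (1 + c M) B` is a psd completion of the same partial matrix of rank `< r`. Iterating reaches
`C(r + 1, 2) ≤ |V| + |E|`, which is the stated bound on `r`.
-/

open Matrix Unitary

/-- `Y` agrees with `X` on all diagonal entries and all entries indexed by edges of `G`. -/
def agreesOn {V : Type*} (G : SimpleGraph V) (X Y : Matrix V V ℝ) : Prop :=
  (∀ i, Y i i = X i i) ∧ ∀ i j, G.Adj i j → Y i j = X i j

lemma agreesOn_refl {V : Type*} (G : SimpleGraph V) (X : Matrix V V ℝ) : agreesOn G X X :=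
  ⟨fun _ => rfl, fun _ _ _ => rfl⟩

lemma agreesOn_trans {V : Type*} {G : SimpleGraph V} {X Y Z : Matrix V V ℝ}
    (hXY : agreesOn G X Y) (hYZ : agreesOn G Y Z) : agreesOn G X Z :=
  ⟨fun i => (hYZ.1 i).trans (hXY.1 i), fun i j h => (hYZ.2 i j h).trans (hXY.2 i j h)⟩

namespace Matrix

lemma conjTranspose_submatrix_mul_submatrix_of_rows_eq_zero {R m n p : Type*}
    [NonUnitalSemiring R] [StarRing R] [Fintype n] [Fintype p]
    (C : Matrix n m R) {f : p → n} (hf : f.Injective) (hC : ∀ i ∉ Set.range f, C i = 0) :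
    (C.submatrix f id)ᴴ * C.submatrix f id = Cᴴ * C := by
  ext u v
  simp only [mul_apply, conjTranspose_apply, submatrix_apply, id]
  exact Fintype.sum_of_injective f hf _ _ (fun i hi => by simp [hC i hi]) fun _ => rfl

section Spectral

variable {n : Type*} [Fintype n] [DecidableEq n]

lemma rank_conjStarAlgAut (U : unitary (Matrix n n ℝ)) (A : Matrix n n ℝ) :
    (conjStarAlgAut ℝ _ U A).rank = A.rank := by
  rw [conjStarAlgAut_apply, ← coe_star]
  simp [-isUnit_iff_ne_zero, -coe_star]

lemma PosSemidef.conjStarAlgAut {A : Matrix n n ℝ} (hA : A.PosSemidef)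
    (U : unitary (Matrix n n ℝ)) : (conjStarAlgAut ℝ _ U A).PosSemidef := by
  rw [conjStarAlgAut_apply, star_eq_conjTranspose]
  exact hA.mul_mul_conjTranspose_same _

/-- `B` is `diag(√μ) Uᴴ` from the spectral decomposition, with the zero rows dropped. -/
lemma PosSemidef.exists_eq_conjTranspose_mul_self_fin_rank {X : Matrix n n ℝ}
    (hX : X.PosSemidef) : ∃ B : Matrix (Fin X.rank) n ℝ, X = Bᴴ * B := by
  have hspec := hX.1.spectral_theorem
  have hμ := hX.eigenvalues_nonneg
  obtain ⟨e⟩ : Nonempty (Fin X.rank ≃ {k // hX.1.eigenvalues k ≠ 0}) :=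
    ⟨(Fintype.equivFinOfCardEq hX.1.rank_eq_card_non_zero_eigs.symm).symm⟩
  set μ := hX.1.eigenvalues
  set U := hX.1.eigenvectorUnitary
  clear_value μ U
  set C : Matrix n n ℝ := diagonal (fun k => √(μ k)) * star (U : Matrix n n ℝ)
  refine ⟨C.submatrix (Subtype.val ∘ e) id, ?_⟩
  rw [conjTranspose_submatrix_mul_submatrix_of_rows_eq_zero C
    (Subtype.val_injective.comp e.injective)]
  · have hsqrt : diagonal (fun k => √(μ k)) * diagonal (fun k => √(μ k)) = diagonal μ := by
      rw [diagonal_mul_diagonal]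
      exact congrArg diagonal (funext fun k => Real.mul_self_sqrt (hμ k))
    rw [hspec, conjStarAlgAut_apply, RCLike.ofReal_real_eq_id, Function.id_comp]
    simp only [C, conjTranspose_mul, star_eq_conjTranspose, conjTranspose_conjTranspose,
      diagonal_conjTranspose, star_trivial]
    rw [← hsqrt, Matrix.mul_assoc, Matrix.mul_assoc, Matrix.mul_assoc]
  · intro i hi
    have hμi : μ i = 0 := by
      by_contra h
      exact hi ⟨e.symm ⟨i, h⟩, by simp⟩
    ext j
    simp [C, diagonal_mul, hμi]

/-- Take `c = -1 / μⱼ` for an eigenvalue `μⱼ` of largest modulus: then `1 + c M` has the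
eigenvalues `1 - μₖ / μⱼ ≥ 0`, and the one for `k = j` vanishes. -/
lemma IsHermitian.exists_posSemidef_one_add_smul_rank_lt {M : Matrix n n ℝ}
    (hM : M.IsHermitian) (hM0 : M ≠ 0) :
    ∃ c : ℝ, (1 + c • M).PosSemidef ∧ (1 + c • M).rank < Fintype.card n := by
  have hspec := hM.spectral_theorem
  have hμ0 : hM.eigenvalues ≠ 0 := mt hM.eigenvalues_eq_zero_iff.1 hM0
  set μ := hM.eigenvalues
  set U := hM.eigenvectorUnitary
  clear_value μ U
  subst hspec
  obtain ⟨i, -⟩ := Function.ne_iff.1 hμ0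
  obtain ⟨j, -, hj⟩ := Finset.exists_max_image Finset.univ (fun k => |μ k|) ⟨i, Finset.mem_univ i⟩
  have hj0 : μ j ≠ 0 := by
    intro h0
    exact hμ0 (funext fun k => by simpa [h0] using hj k (Finset.mem_univ k))
  set d : n → ℝ := fun k => 1 - μ k / μ j
  have hd : 1 + (-(μ j)⁻¹) • conjStarAlgAut ℝ _ U (diagonal (RCLike.ofReal ∘ μ)) =
      conjStarAlgAut ℝ _ U (diagonal d) := by
    rw [← map_one (conjStarAlgAut ℝ _ U), ← map_smul, ← map_add, RCLike.ofReal_real_eq_id,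
      Function.id_comp, ← diagonal_one, ← diagonal_smul, diagonal_add]
    congr 2 with k
    simp only [Pi.smul_apply, smul_eq_mul, d]
    ring
  refine ⟨-(μ j)⁻¹, ?_, ?_⟩
  · rw [hd]
    refine PosSemidef.conjStarAlgAut (posSemidef_diagonal_iff.2 fun k => ?_) _
    have hk : μ k / μ j ≤ 1 := (le_abs_self _).trans <| by
      rw [abs_div]; exact div_le_one_of_le₀ (hj k (Finset.mem_univ k)) (abs_nonneg _)
    linarith
  · rw [hd, rank_conjStarAlgAut, rank_diagonal]
    exact Fintype.card_subtype_lt (x := j) (by simp [d, hj0])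

end Spectral

def ofSym2LinearMap (K p : Type*) [Semiring K] : (Sym2 p → K) →ₗ[K] Matrix p p K where
  toFun f := of fun i j => f s(i, j)
  map_add' _ _ := rfl
  map_smul' _ _ := rfl

section Sym2

variable {K p : Type*} [Semiring K]

lemma isSymm_ofSym2LinearMap (f : Sym2 p → K) : (ofSym2LinearMap K p f).IsSymm :=
  IsSymm.ext fun _ _ => congrArg f Sym2.eq_swap

lemma ofSym2LinearMap_injective : Function.Injective (ofSym2LinearMap K p) := by
  intro f g h
  funext z
  induction z using Sym2.ind with
  | _ i j => exact congrFun (congrFun h i) j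

end Sym2

lemma IsSymm.transpose_mul_mul {K n p : Type*} [CommSemiring K] [Fintype p]
    {M : Matrix p p K} (hM : M.IsSymm) (B : Matrix p n K) : (Bᵀ * M * B).IsSymm := by
  rw [IsSymm, transpose_mul, transpose_mul, transpose_transpose, hM.eq, Matrix.mul_assoc]

lemma IsSymm.apply_out {α n : Type*} {A : Matrix n n α} (hA : A.IsSymm) (i j : n) :
    A (s(i, j) : Sym2 n).out.1 (s(i, j) : Sym2 n).out.2 = A i j := by
  have h : s((s(i, j) : Sym2 n).out.1, (s(i, j) : Sym2 n).out.2) = s(i, j) := Quot.out_eq _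
  rcases Sym2.eq_iff.1 h with ⟨h1, h2⟩ | ⟨h1, h2⟩
  · rw [h1, h2]
  · rw [h1, h2, hA.apply]

/-- The symmetric `p × p` matrices form a space of dimension `|Sym2 p|`, so fewer linear
conditions, one per entry `s(i, j) ∈ S` of `Bᵀ M B`, leave a nonzero solution. -/
lemma exists_isSymm_ne_zero_transpose_mul_mul_eq_zero {K n p : Type*} [Field K] [Fintype p]
    (B : Matrix p n K) (S : Finset (Sym2 n)) (hS : S.card < Fintype.card (Sym2 p)) :
    ∃ M : Matrix p p K, M.IsSymm ∧ M ≠ 0 ∧ ∀ i j, s(i, j) ∈ S → (Bᵀ * M * B) i j = 0 := by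
  let T : (Sym2 p → K) →ₗ[K] S → K :=
    { toFun := fun f e => (Bᵀ * ofSym2LinearMap K p f * B) e.1.out.1 e.1.out.2
      map_add' := fun f g => by ext e; simp [Matrix.mul_add, Matrix.add_mul]
      map_smul' := fun c f => by ext e; simp }
  obtain ⟨f, hf, hf0⟩ := Submodule.exists_mem_ne_zero_of_ne_bot
    (LinearMap.ker_ne_bot_of_finrank_lt (f := T) (by simpa using hS))
  have hM := isSymm_ofSym2LinearMap f
  refine ⟨ofSym2LinearMap K p f, hM, ?_, fun i j hij => ?_⟩
  · exact fun h => hf0 (ofSym2LinearMap_injective (h.trans (map_zero _).symm))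
  · rw [← (hM.transpose_mul_mul B).apply_out]
    exact congrFun hf ⟨_, hij⟩

end Matrix

lemma Nat.le_floor_of_choose_le {r m : ℕ} (h : (r + 1).choose 2 ≤ m) :
    r ≤ ⌊(√(1 + 8 * (m : ℝ)) - 1) / 2⌋₊ := by
  have hr : ((r + 1 : ℕ) : ℝ) * r / 2 ≤ m := by
    simpa [Nat.cast_choose_two] using (Nat.cast_le (α := ℝ)).2 h
  have hsqrt : 2 * (r : ℝ) + 1 ≤ √(1 + 8 * m) :=
    Real.le_sqrt_of_sq_le (by push_cast at hr; nlinarith)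
  exact Nat.le_floor (by linarith)

section Completion

variable {V : Type*} [Fintype V] [DecidableEq V] (G : SimpleGraph V) [DecidableRel G.Adj]

lemma exists_posSemidef_agreesOn_rank_lt {X : Matrix V V ℝ} (hX : X.PosSemidef)
    (hr : Fintype.card V + G.edgeFinset.card < (X.rank + 1).choose 2) :
    ∃ Y : Matrix V V ℝ, Y.PosSemidef ∧ agreesOn G X Y ∧ Y.rank < X.rank := by
  obtain ⟨B, hB⟩ := hX.exists_eq_conjTranspose_mul_self_fin_rank
  set S : Finset (Sym2 V) := Finset.univ.image Sym2.diag ∪ G.edgeFinset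
  have hS : S.card < Fintype.card (Sym2 (Fin X.rank)) := by
    refine lt_of_le_of_lt ?_ (by rwa [Sym2.card, Fintype.card_fin])
    exact (Finset.card_union_le _ _).trans
      (Nat.add_le_add_right (Finset.card_image_le.trans_eq Finset.card_univ) _)
  obtain ⟨M, hM, hM0, hMS⟩ := exists_isSymm_ne_zero_transpose_mul_mul_eq_zero B S hS
  obtain ⟨c, hc, hcr⟩ := (isHermitian_iff_isSymm.2 hM).exists_posSemidef_one_add_smul_rank_lt hM0
  have hY : Bᴴ * (1 + c • M) * B = X + c • (Bᵀ * M * B) := by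
    rw [Matrix.mul_add, Matrix.mul_one, Matrix.add_mul, ← hB, Matrix.mul_smul, Matrix.smul_mul,
      conjTranspose_eq_transpose_of_trivial]
  refine ⟨Bᴴ * (1 + c • M) * B, hc.conjTranspose_mul_mul_same B, ?_, ?_⟩
  · rw [hY]
    refine ⟨fun i => ?_, fun i j hij => ?_⟩
    · simp [hMS i i (Finset.mem_union_left _ (Finset.mem_image_of_mem _ (Finset.mem_univ i)))]
    · simp [hMS i j (Finset.mem_union_right _ (G.mem_edgeFinset.2 hij))]
  · calc (Bᴴ * (1 + c • M) * B).rank ≤ (1 + c • M).rank :=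
          (rank_mul_le_left _ _).trans (rank_mul_le_right _ _)
      _ < X.rank := by simpa using hcr

lemma exists_posSemidef_agreesOn_choose_rank_le {X : Matrix V V ℝ} (hX : X.PosSemidef) :
    ∃ Y : Matrix V V ℝ, Y.PosSemidef ∧ agreesOn G X Y ∧
      (Y.rank + 1).choose 2 ≤ Fintype.card V + G.edgeFinset.card := by
  induction h : X.rank using Nat.strong_induction_on generalizing X with
  | _ r ih =>
    by_cases hr : (X.rank + 1).choose 2 ≤ Fintype.card V + G.edgeFinset.card
    · exact ⟨X, hX, agreesOn_refl G X, hr⟩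
    · obtain ⟨Y, hY, hXY, hlt⟩ := exists_posSemidef_agreesOn_rank_lt G hX (not_le.1 hr)
      obtain ⟨Z, hZ, hYZ, hZr⟩ := ih _ (h ▸ hlt) hY rfl
      exact ⟨Z, hZ, agreesOn_trans hXY hYZ, hZr⟩

end Completion

/-- If a `G`-partial matrix (given here by a psd completion `X` of it) admits a psd completion,
then it admits a psd completion of rank at most `⌊(√(1+8(|V|+|E|)) − 1)/2⌋`. -/
theorem exists_low_rank_psd_completion {V : Type*} [Fintype V] [DecidableEq V]
    (G : SimpleGraph V) [DecidableRel G.Adj]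
    (X : Matrix V V ℝ) (hX : X.PosSemidef) :
    ∃ Y : Matrix V V ℝ, Y.PosSemidef ∧ agreesOn G X Y ∧
      Y.rank ≤
        ⌊(Real.sqrt (1 + 8 * ((Fintype.card V : ℝ) + (G.edgeFinset.card : ℝ))) - 1) / 2⌋₊ := by
  obtain ⟨Y, hY, hXY, hrank⟩ := exists_posSemidef_agreesOn_choose_rank_le G hX
  refine ⟨Y, hY, hXY, ?_⟩
  exact_mod_cast Nat.le_floor_of_choose_le hrank
end

section
/- For any graph G = ([n], E) and any edge e ∈ E, the Gram dimension is monotone under edge deletion and edge contraction: gd(G \ e) ≤ gd(G) and gd(G / e) ≤ gd(G). Consequently, if H is a minor of G then gd(H) ≤ gd(G). -/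
/-- `gramDimLE G k` : every psd matrix indexed by `V` admits a psd matrix of rank at most `k`
agreeing with it on the diagonal and on the edges of `G`. -/
def gramDimLE {V : Type*} [Fintype V] (G : SimpleGraph V) (k : ℕ) : Prop :=
  ∀ X : Matrix V V ℝ, X.PosSemidef →
    ∃ Y : Matrix V V ℝ, Y.PosSemidef ∧ Y.rank ≤ k ∧ agreesOn G X Y

/-- The Gram dimension of a graph. -/
noncomputable def gramDim {V : Type*} [Fintype V] (G : SimpleGraph V) : ℕ :=
  sInf {k | gramDimLE G k}

/-- The graph obtained from `G` by contracting the edge `(u, v)` (node `v` is removed and its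
neighbours are attached to `u`). -/
def contractEdge {V : Type*} (G : SimpleGraph V) (u v : V) : SimpleGraph {x : V // x ≠ v} :=
  SimpleGraph.fromRel fun a b =>
    G.Adj a b ∨ ((a : V) = u ∧ G.Adj v b) ∨ ((b : V) = u ∧ G.Adj v a)

/-- `H` is a minor of `G`: there are disjoint nonempty connected branch sets in `G`, one for each
node of `H`, such that every edge of `H` is realized by an edge of `G` between branch sets. -/
def IsGraphMinor {W V : Type*} (H : SimpleGraph W) (G : SimpleGraph V) : Prop :=
  ∃ φ : V → Option W,
    (∀ w, ∃ v, φ v = some w) ∧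
    (∀ w, (G.induce {v | φ v = some w}).Connected) ∧
    (∀ w₁ w₂, H.Adj w₁ w₂ → ∃ v₁ v₂, φ v₁ = some w₁ ∧ φ v₂ = some w₂ ∧ G.Adj v₁ v₂)

/-!
Lift a psd matrix `X` on the nodes of a minor `H` to the nodes of `G` by copying row and column
`w` to every node of the branch set of `w` (and zero elsewhere); the lift is `Pᵀ X P` for a
0/1 matrix `P`, hence psd. A low-rank completion `Y` of the lift for `G` equals `X w w` on the
diagonal and on the edges inside the branch set of `w`. For psd `Y`, `Y p q = Y p p = Y q q`
puts `e_p - e_q` in the kernel of `Y`, so rows `p` and `q` of `Y` coincide; by connectivity the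
rows of `Y` are constant on each branch set. Restricting `Y` to one node per branch set then
gives a completion of `X` for `H`, of no larger rank. Deleting an edge only drops constraints,
and contracting an edge yields a minor.
-/

namespace Matrix.PosSemidef

variable {n : Type*} {Y : Matrix n n ℝ}

lemma apply_comm (hY : Y.PosSemidef) (a b : n) : Y a b = Y b a := by
  simpa using hY.1.apply b a

variable [Fintype n]

lemma row_eq_of_apply_eq (hY : Y.PosSemidef) {a b : n} (hab : Y a b = Y a a)
    (hbb : Y b b = Y a a) (c : n) : Y a c = Y b c := by
  classical
  set x : n → ℝ := Pi.single a 1 - Pi.single b 1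
  have hmulVec : ∀ c, (Y *ᵥ x) c = Y c a - Y c b := by
    simp [x, Matrix.mulVec_sub, Matrix.mulVec_single]
  have hquad : star x ⬝ᵥ Y *ᵥ x = 0 := by
    have hx : star x ⬝ᵥ Y *ᵥ x = (Y *ᵥ x) a - (Y *ᵥ x) b := by
      simp [x, sub_dotProduct, single_dotProduct]
    rw [hx, hmulVec, hmulVec, hY.apply_comm b a, hab, hbb]
    ring
  have hc := congrFun ((hY.dotProduct_mulVec_zero_iff x).mp hquad) c
  rw [hmulVec, Pi.zero_apply, sub_eq_zero] at hc
  rw [hY.apply_comm a c, hc, hY.apply_comm c b]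

lemma row_eq_of_reachable (hY : Y.PosSemidef) (G : SimpleGraph n) {S : Set n} {c : ℝ}
    (hdiag : ∀ p ∈ S, Y p p = c) (hadj : ∀ p ∈ S, ∀ q ∈ S, G.Adj p q → Y p q = c)
    {a b : S} (hab : (G.induce S).Reachable a b) (x : n) : Y a x = Y b x := by
  obtain ⟨w⟩ := hab
  induction w with
  | nil => rfl
  | @cons p q r hpq _ ih =>
    have hpq' : Y p q = Y p p := by
      rw [hadj _ p.2 _ q.2 hpq, hdiag _ p.2]
    have hqq : Y q q = Y p p := by
      rw [hdiag _ q.2, hdiag _ p.2]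
    rw [hY.row_eq_of_apply_eq hpq' hqq, ih]

end Matrix.PosSemidef

open Matrix in
lemma Matrix.PosSemidef.exists_pullback_option {V W : Type*} [Fintype V] [Fintype W]
    {X : Matrix W W ℝ} (hX : X.PosSemidef) (φ : V → Option W) :
    ∃ Z : Matrix V V ℝ, Z.PosSemidef ∧
      ∀ p q w w', φ p = some w → φ q = some w' → Z p q = X w w' := by
  classical
  let P : Matrix W V ℝ := Matrix.of fun w p => if φ p = some w then 1 else 0
  refine ⟨Pᵀ * X * P, by simpa using hX.conjTranspose_mul_mul_same P, ?_⟩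
  intro p q w w' hp hq
  simp [P, Matrix.mul_apply, hp, hq]

lemma isGraphMinor_contractEdge {V : Type*} {G : SimpleGraph V} {u v : V} (huv : G.Adj u v) :
    IsGraphMinor (contractEdge G u v) G := by
  classical
  let π : V → {x : V // x ≠ v} := fun a => if h : a = v then ⟨u, huv.ne⟩ else ⟨a, h⟩
  have hπ : ∀ x : {x : V // x ≠ v}, π x = x := fun x => dif_neg x.2
  have hπv : π v = ⟨u, huv.ne⟩ := dif_pos rfl
  have hrealize : ∀ a b : {x : V // x ≠ v},
      G.Adj a b ∨ ((a : V) = u ∧ G.Adj v b) ∨ ((b : V) = u ∧ G.Adj v a) →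
        ∃ p q, some (π p) = some a ∧ some (π q) = some b ∧ G.Adj p q := by
    rintro a b (hab | ⟨rfl, hvb⟩ | ⟨rfl, hva⟩)
    · exact ⟨a, b, by rw [hπ], by rw [hπ], hab⟩
    · exact ⟨v, b, by rw [hπv], by rw [hπ], hvb⟩
    · exact ⟨a, v, by rw [hπ], by rw [hπv], hva.symm⟩
  refine ⟨fun a => some (π a), fun x => ⟨x, congrArg some (hπ x)⟩, fun x => ?_, fun a b hab => ?_⟩
  · refine (SimpleGraph.connected_iff_exists_forall_reachable _).mpr
      ⟨⟨x, congrArg some (hπ x)⟩, fun ⟨p, hp⟩ => ?_⟩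
    replace hp : π p = x := Option.some_inj.mp hp
    by_cases hpv : p = v
    · subst hpv
      subst hp
      exact (SimpleGraph.induce_adj.mpr (by simpa [hπv] using huv)).reachable
    · obtain rfl : x = ⟨p, hpv⟩ := hp.symm.trans (dif_neg hpv)
      rfl
  · obtain ⟨-, hab | hba⟩ := SimpleGraph.fromRel_adj _ a b |>.mp hab
    · exact hrealize a b hab
    · obtain ⟨p, q, hp, hq, hpq⟩ := hrealize b a hba
      exact ⟨q, p, hq, hp, hpq.symm⟩

section GramDim

variable {V W : Type*} [Fintype V] [Fintype W]

lemma gramDimLE_card (G : SimpleGraph V) : gramDimLE G (Fintype.card V) :=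
  fun X hX => ⟨X, hX, X.rank_le_card_width, fun _ => rfl, fun _ _ _ => rfl⟩

lemma gramDim_le_of_gramDimLE {H : SimpleGraph W} {G : SimpleGraph V}
    (h : ∀ k, gramDimLE G k → gramDimLE H k) : gramDim H ≤ gramDim G :=
  Nat.sInf_le (h _ (Nat.sInf_mem (s := {k | gramDimLE G k}) ⟨_, gramDimLE_card G⟩))

lemma gramDimLE.of_le {H G : SimpleGraph V} (hHG : H ≤ G) {k : ℕ} (hk : gramDimLE G k) :
    gramDimLE H k := by
  intro X hX
  obtain ⟨Y, hY, hrank, hdiag, hadj⟩ := hk X hX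
  exact ⟨Y, hY, hrank, hdiag, fun i j hij => hadj i j (hHG hij)⟩

lemma IsGraphMinor.gramDimLE {H : SimpleGraph W} {G : SimpleGraph V} (hHG : IsGraphMinor H G)
    {k : ℕ} (hk : gramDimLE G k) : gramDimLE H k := by
  obtain ⟨φ, hsurj, hconn, hedges⟩ := hHG
  choose σ hσ using hsurj
  intro X hX
  obtain ⟨Z, hZ, hZX⟩ := hX.exists_pullback_option φ
  obtain ⟨Y, hY, hrank, hdiag, hadj⟩ := hk Z hZ
  have hYX : ∀ p q w w', φ p = some w → φ q = some w' → G.Adj p q → Y p q = X w w' :=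
    fun p q w w' hp hq hpq => (hadj p q hpq).trans (hZX p q w w' hp hq)
  have hrow : ∀ w p q, φ p = some w → φ q = some w → ∀ x, Y p x = Y q x := by
    intro w p q hp hq
    refine hY.row_eq_of_reachable G (S := {v | φ v = some w}) (c := X w w)
      (fun r hr => (hdiag r).trans (hZX r r w w hr hr))
      (fun r hr s hs hrs => hYX r s w w hr hs hrs) (a := ⟨p, hp⟩) (b := ⟨q, hq⟩) ?_
    exact (hconn w).preconnected _ _
  refine ⟨Y.submatrix σ σ, hY.submatrix σ, (Y.rank_submatrix_le σ σ).trans hrank,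
    fun w => (hdiag (σ w)).trans (hZX _ _ w w (hσ w) (hσ w)), fun w₁ w₂ hw => ?_⟩
  obtain ⟨v₁, v₂, hv₁, hv₂, hv₁₂⟩ := hedges w₁ w₂ hw
  calc Y (σ w₁) (σ w₂) = Y v₁ (σ w₂) := hrow w₁ _ _ (hσ w₁) hv₁ _
    _ = Y (σ w₂) v₁ := hY.apply_comm _ _
    _ = Y v₂ v₁ := hrow w₂ _ _ (hσ w₂) hv₂ _
    _ = Y v₁ v₂ := hY.apply_comm _ _
    _ = X w₁ w₂ := hYX v₁ v₂ w₁ w₂ hv₁ hv₂ hv₁₂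

lemma IsGraphMinor.gramDim_le {H : SimpleGraph W} {G : SimpleGraph V}
    (hHG : IsGraphMinor H G) : gramDim H ≤ gramDim G :=
  gramDim_le_of_gramDimLE fun _ => hHG.gramDimLE

end GramDim

/-- The Gram dimension is monotone nonincreasing under edge deletion and edge contraction;
consequently it is minor monotone. -/
theorem gramDim_minor_monotone {V : Type*} [Fintype V] [DecidableEq V] (G : SimpleGraph V) :
    (∀ e ∈ G.edgeSet, gramDim (G.deleteEdges {e}) ≤ gramDim G) ∧
    (∀ u v : V, G.Adj u v → gramDim (contractEdge G u v) ≤ gramDim G) ∧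
    (∀ (W : Type) [Fintype W] (H : SimpleGraph W), IsGraphMinor H G → gramDim H ≤ gramDim G) :=
  ⟨fun _ _ => gramDim_le_of_gramDimLE fun _ => gramDimLE.of_le (G.deleteEdges_le _),
    fun _ _ huv => (isGraphMinor_contractEdge huv).gramDim_le,
    fun _ _ _ hHG => hHG.gramDim_le⟩
end

section
/- Let X₁ ∈ S^{V₁}_+ and X₂ ∈ S^{V₂}_+ be positive semidefinite matrices such that X₁[V₁∩V₂] = X₂[V₁∩V₂]. Then there exists a positive semidefinite matrix X indexed by V₁∪V₂ with X[V₁] = X₁, X[V₂] = X₂, and rank(X) = max{rank(X₁), rank(X₂)}. -/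
/-!
Write `X₁` and `X₂` as Gram matrices of families `(a v)_{v ∈ V₁}` and `(b v)_{v ∈ V₂}` of vectors
and suppose `rank X₂ ≤ rank X₁`, i.e. `dim span b ≤ dim span a`. The assignment `b v ↦ a v` for
`v ∈ V₁ ∩ V₂` preserves inner products because the two matrices agree on the overlap, so it is a
partial isometry into `W = span a`; after embedding `span b` isometrically into `W` it extends to
an isometry `span b → W`. The vectors `a v` (`v ∈ V₁`) together with the images of the `b v`
(`v ∈ V₂`) form one family indexed by `V₁ ∪ V₂`; it spans `W`, so its Gram matrix is a psd
completion of rank `dim W = rank X₁`.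
-/

open Module Submodule Set

theorem Set.exists_glue_of_union_eq_univ {α β : Type*} {s t : Set α} (hst : s ∪ t = univ)
    (f : s → β) (g : t → β) (hfg : ∀ x (hs : x ∈ s) (ht : x ∈ t), f ⟨x, hs⟩ = g ⟨x, ht⟩) :
    ∃ h : α → β, (∀ x (hx : x ∈ s), h x = f ⟨x, hx⟩) ∧ ∀ x (hx : x ∈ t), h x = g ⟨x, hx⟩ := by
  classical
  refine ⟨fun x => if hx : x ∈ s then f ⟨x, hx⟩
    else g ⟨x, (hst ▸ mem_univ x : x ∈ s ∪ t).resolve_left hx⟩, fun x hx => dif_pos hx,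
    fun x hx => ?_⟩
  dsimp only
  split_ifs with hs
  exacts [hfg x hs hx, rfl]

section InnerProductSpace

variable {𝕜 E F : Type*} [RCLike 𝕜] [NormedAddCommGroup E] [InnerProductSpace 𝕜 E]
  [NormedAddCommGroup F] [InnerProductSpace 𝕜 F]

local notation "⟪" x ", " y "⟫" => @inner 𝕜 _ _ x y

theorem exists_linearIsometry_of_finrank_le [FiniteDimensional 𝕜 E] [FiniteDimensional 𝕜 F]
    (h : finrank 𝕜 E ≤ finrank 𝕜 F) : Nonempty (E →ₗᵢ[𝕜] F) := by
  let bE := stdOrthonormalBasis 𝕜 E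
  let bF := stdOrthonormalBasis 𝕜 F
  refine ⟨(bE.toBasis.constr 𝕜 (bF ∘ Fin.castLE h)).isometryOfOrthonormal
    (v := bE.toBasis) (by simp) ?_⟩
  convert bF.orthonormal.comp _ (Fin.castLE_injective h)
  ext i
  simp

theorem exists_linearIsometry_span_of_inner_eq {ι : Type*} (a : ι → E) (b : ι → F)
    (h : ∀ i j, ⟪a i, a j⟫ = ⟪b i, b j⟫) :
    ∃ f : span 𝕜 (range b) →ₗᵢ[𝕜] E, ∀ i, f ⟨b i, subset_span (mem_range_self i)⟩ = a i := by
  set φa := Finsupp.linearCombination 𝕜 a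
  set φb := Finsupp.linearCombination 𝕜 b
  have inner_φ : ∀ c d, ⟪φa c, φa d⟫ = ⟪φb c, φb d⟫ := fun c d => by
    simp only [φa, φb, Finsupp.linearCombination_apply, Finsupp.sum_inner, Finsupp.inner_sum,
      inner_smul_left, inner_smul_right, h]
  have hker : LinearMap.ker φb ≤ LinearMap.ker φa := fun c hc => by
    rw [LinearMap.mem_ker] at hc ⊢
    rw [← inner_self_eq_zero (𝕜 := 𝕜), inner_φ, hc, inner_zero_left]
  have hrange : span 𝕜 (range b) = LinearMap.range φb :=
    (Finsupp.range_linearCombination (R := 𝕜)).symm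
  let f₀ : span 𝕜 (range b) →ₗ[𝕜] E := (LinearMap.ker φb).liftQ φa hker ∘ₗ
    φb.quotKerEquivRange.symm.toLinearMap ∘ₗ (LinearEquiv.ofEq _ _ hrange).toLinearMap
  have hf₀ : ∀ c (hc : φb c ∈ span 𝕜 (range b)), f₀ ⟨φb c, hc⟩ = φa c := fun c hc => by
    show (LinearMap.ker φb).liftQ φa hker
      (φb.quotKerEquivRange.symm ⟨φb c, LinearMap.mem_range_self φb c⟩) = φa c
    rw [LinearMap.quotKerEquivRange_symm_apply_image]
    rfl
  have hf₀_inner : ∀ x y, ⟪f₀ x, f₀ y⟫ = ⟪x, y⟫ := by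
    rintro ⟨x, hx⟩ ⟨y, hy⟩
    obtain ⟨c, rfl⟩ := hrange ▸ hx
    obtain ⟨d, rfl⟩ := hrange ▸ hy
    rw [hf₀, hf₀, inner_φ]
    rfl
  refine ⟨f₀.isometryOfInner hf₀_inner, fun i => ?_⟩
  simpa [φa, φb] using
    hf₀ (Finsupp.single i 1) (by simpa [φb] using subset_span (mem_range_self i))

theorem exists_isometric_copy_extending [FiniteDimensional 𝕜 E] [FiniteDimensional 𝕜 F]
    {ι : Type*} {s : Set ι}
    (a : s → E) (b : ι → F) (h : ∀ i j : s, ⟪a i, a j⟫ = ⟪b i, b j⟫)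
    (hdim : finrank 𝕜 (span 𝕜 (range b)) ≤ finrank 𝕜 E) :
    ∃ y : ι → E, (∀ i j, ⟪y i, y j⟫ = ⟪b i, b j⟫) ∧ ∀ i : s, y i = a i := by
  obtain ⟨e⟩ := exists_linearIsometry_of_finrank_le hdim
  let b' : ι → span 𝕜 (range b) := fun i => ⟨b i, subset_span (mem_range_self i)⟩
  obtain ⟨f, hf⟩ := exists_linearIsometry_span_of_inner_eq a (fun i : s => e (b' i))
    (fun i j => (h i j).trans (e.inner_map_map (b' i) (b' j)).symm)
  refine ⟨fun i => f.extend (e (b' i)), fun i j => ?_, fun i => ?_⟩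
  · rw [f.extend.inner_map_map, e.inner_map_map]
    rfl
  · rw [← hf i, ← f.extend_apply]

end InnerProductSpace

namespace Matrix

open scoped ComplexOrder MatrixOrder

variable {𝕜 E n : Type*} [RCLike 𝕜] [NormedAddCommGroup E] [InnerProductSpace 𝕜 E] [Fintype n]

theorem PosSemidef.exists_eq_gram {X : Matrix n n 𝕜} (hX : X.PosSemidef) :
    ∃ v : n → EuclideanSpace 𝕜 n, X = gram 𝕜 v := by
  classical
  obtain ⟨B, rfl⟩ := CStarAlgebra.nonneg_iff_eq_star_mul_self.mp hX.nonneg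
  refine ⟨fun j => WithLp.toLp 2 (fun i => B i j), ?_⟩
  rw [gram_eq_conjTranspose_mul (EuclideanSpace.basisFun n 𝕜)]
  rfl

theorem rank_gram [FiniteDimensional 𝕜 E] (v : n → E) :
    (gram 𝕜 v).rank = finrank 𝕜 (span 𝕜 (range v)) := by
  let b := stdOrthonormalBasis 𝕜 E
  rw [gram_eq_conjTranspose_mul b, rank_conjTranspose_mul_self, rank_eq_finrank_span_cols]
  let L : E ≃ₗ[𝕜] (Fin (finrank 𝕜 E) → 𝕜) :=
    b.repr.toLinearEquiv.trans (WithLp.linearEquiv 2 𝕜 _)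
  have hcols : range (of fun i j => (b.repr (v j)).ofLp i).col = L '' range v := by
    rw [← range_comp]
    rfl
  rw [hcols, ← LinearEquiv.coe_coe, ← map_span, LinearEquiv.finrank_map_eq]

end Matrix

open Matrix ComplexOrder in
theorem exists_posSemidef_glue_of_rank_le {𝕜 V : Type*} [RCLike 𝕜] [Fintype V]
    (V₁ V₂ : Set V) [Fintype V₁] [Fintype V₂] (hcover : V₁ ∪ V₂ = univ)
    (X₁ : Matrix V₁ V₁ 𝕜) (X₂ : Matrix V₂ V₂ 𝕜) (h₁ : X₁.PosSemidef) (h₂ : X₂.PosSemidef)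
    (hagree : ∀ (u v : V) (hu₁ : u ∈ V₁) (hu₂ : u ∈ V₂) (hv₁ : v ∈ V₁) (hv₂ : v ∈ V₂),
      X₁ ⟨u, hu₁⟩ ⟨v, hv₁⟩ = X₂ ⟨u, hu₂⟩ ⟨v, hv₂⟩)
    (hrank : X₂.rank ≤ X₁.rank) :
    ∃ X : Matrix V V 𝕜, X.PosSemidef ∧
      (∀ (u v : V) (hu : u ∈ V₁) (hv : v ∈ V₁), X u v = X₁ ⟨u, hu⟩ ⟨v, hv⟩) ∧
      (∀ (u v : V) (hu : u ∈ V₂) (hv : v ∈ V₂), X u v = X₂ ⟨u, hu⟩ ⟨v, hv⟩) ∧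
      X.rank = X₁.rank := by
  obtain ⟨a, rfl⟩ := h₁.exists_eq_gram
  obtain ⟨b, rfl⟩ := h₂.exists_eq_gram
  rw [rank_gram, rank_gram] at hrank
  set W := span 𝕜 (range a)
  let a' : {v : V₂ | ↑v ∈ V₁} → W := fun v => ⟨a ⟨v, v.2⟩, subset_span (mem_range_self _)⟩
  obtain ⟨y, hy, hya⟩ := exists_isometric_copy_extending (𝕜 := 𝕜) a' b
    (fun u v => hagree u v u.2 u.1.2 v.2 v.1.2) hrank
  obtain ⟨x, hx₁, hx₂⟩ := exists_glue_of_union_eq_univ hcover a (fun v => (y v : _))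
    fun v h₁ h₂ => congrArg Subtype.val (hya ⟨⟨v, h₂⟩, h₁⟩).symm
  have hspan : span 𝕜 (range x) = W := by
    refine le_antisymm (span_le.2 ?_) (span_mono ?_)
    · rintro _ ⟨v, rfl⟩
      rcases (hcover ▸ mem_univ v : v ∈ V₁ ∪ V₂) with h | h
      · rw [hx₁ v h]
        exact subset_span (mem_range_self _)
      · rw [hx₂ v h]
        exact (y _).2
    · rintro _ ⟨u, rfl⟩
      exact ⟨u, hx₁ u u.2⟩
  refine ⟨gram 𝕜 x, posSemidef_gram 𝕜 x, fun u v hu hv => ?_, fun u v hu hv => ?_, ?_⟩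
  · simp only [gram_apply, hx₁ u hu, hx₁ v hv]
  · simp only [gram_apply, hx₂ u hu, hx₂ v hv, ← hy]
    rfl
  · rw [rank_gram, rank_gram, hspan]

theorem psd_gluing_general {V : Type*} [Fintype V]
    (V₁ V₂ : Set V) [Fintype ↥V₁] [Fintype ↥V₂]
    (hcover : V₁ ∪ V₂ = Set.univ)
    (X₁ : Matrix ↥V₁ ↥V₁ ℝ) (X₂ : Matrix ↥V₂ ↥V₂ ℝ)
    (h₁ : X₁.PosSemidef) (h₂ : X₂.PosSemidef)
    (hagree : ∀ (u v : V) (hu₁ : u ∈ V₁) (hu₂ : u ∈ V₂) (hv₁ : v ∈ V₁) (hv₂ : v ∈ V₂),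
      X₁ ⟨u, hu₁⟩ ⟨v, hv₁⟩ = X₂ ⟨u, hu₂⟩ ⟨v, hv₂⟩) :
    ∃ X : Matrix V V ℝ, X.PosSemidef ∧
      (∀ (u v : V) (hu : u ∈ V₁) (hv : v ∈ V₁), X u v = X₁ ⟨u, hu⟩ ⟨v, hv⟩) ∧
      (∀ (u v : V) (hu : u ∈ V₂) (hv : v ∈ V₂), X u v = X₂ ⟨u, hu⟩ ⟨v, hv⟩) ∧
      X.rank = max X₁.rank X₂.rank := by
  rcases le_total X₂.rank X₁.rank with h | h
  · obtain ⟨X, hX, hX₁, hX₂, hrank⟩ :=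
      exists_posSemidef_glue_of_rank_le V₁ V₂ hcover X₁ X₂ h₁ h₂ hagree h
    exact ⟨X, hX, hX₁, hX₂, by rw [hrank, max_eq_left h]⟩
  · obtain ⟨X, hX, hX₂, hX₁, hrank⟩ :=
      exists_posSemidef_glue_of_rank_le V₂ V₁ (by rwa [union_comm]) X₂ X₁ h₂ h₁
        (fun u v hu₂ hu₁ hv₂ hv₁ => (hagree u v hu₁ hu₂ hv₁ hv₂).symm) h
    exact ⟨X, hX, hX₁, hX₂, by rw [hrank, max_eq_right h]⟩

/-- Two psd matrices indexed by `V₁` and `V₂` that agree on `V₁ ∩ V₂` admit a common psd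
completion indexed by `V = V₁ ∪ V₂` whose rank is the maximum of the two ranks. -/
theorem psd_gluing {V : Type*} [Fintype V] [DecidableEq V]
    (V₁ V₂ : Set V) [Fintype ↥V₁] [Fintype ↥V₂]
    (hcover : V₁ ∪ V₂ = Set.univ)
    (X₁ : Matrix ↥V₁ ↥V₁ ℝ) (X₂ : Matrix ↥V₂ ↥V₂ ℝ)
    (h₁ : X₁.PosSemidef) (h₂ : X₂.PosSemidef)
    (hagree : ∀ (u v : V) (hu₁ : u ∈ V₁) (hu₂ : u ∈ V₂) (hv₁ : v ∈ V₁) (hv₂ : v ∈ V₂),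
      X₁ ⟨u, hu₁⟩ ⟨v, hv₁⟩ = X₂ ⟨u, hu₂⟩ ⟨v, hv₂⟩) :
    ∃ X : Matrix V V ℝ, X.PosSemidef ∧
      (∀ (u v : V) (hu : u ∈ V₁) (hv : v ∈ V₁), X u v = X₁ ⟨u, hu⟩ ⟨v, hv⟩) ∧
      (∀ (u v : V) (hu : u ∈ V₂) (hv : v ∈ V₂), X u v = X₂ ⟨u, hu⟩ ⟨v, hv⟩) ∧
      X.rank = max X₁.rank X₂.rank :=
  psd_gluing_general V₁ V₂ hcover X₁ X₂ h₁ h₂ hagree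
end

section
/- For any graph G, gd(G) ≤ tw(G) + 1, where tw(G) is the tree-width of G. -/
/-- `G` has a tree decomposition of width at most `k`: a tree `T` with bags `B i ⊆ V` covering
all vertices and edges, such that for each vertex the set of bags containing it induces a
connected subtree, and each bag has at most `k + 1` elements. -/
def HasTreeDecompositionOfWidth {V : Type*} (G : SimpleGraph V) (k : ℕ) : Prop :=
  ∃ (ι : Type) (T : SimpleGraph ι) (B : ι → Set V),
    T.Connected ∧ T.IsAcyclic ∧
    (∀ v, ∃ i, v ∈ B i) ∧
    (∀ u v, G.Adj u v → ∃ i, u ∈ B i ∧ v ∈ B i) ∧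
    (∀ v, (T.induce {i | v ∈ B i}).Connected) ∧
    (∀ i, (B i).ncard ≤ k + 1)

/-- The tree-width of a graph. -/
noncomputable def treewidth {V : Type*} (G : SimpleGraph V) : ℕ :=
  sInf {k | HasTreeDecompositionOfWidth G k}

/-!
Let `k = tw G`, and fix a tree decomposition of width `k` and a psd matrix `X`. Rooting the tree
and taking a vertex `v` whose highest bag `B i₀` is as deep as possible, every vertex sharing a
bag with `v` lies in `B i₀`. By induction, the vertices other than `v` carry vectors in `ℝ^(k+1)`
whose inner products match `X` on all pairs sharing a bag. Since `B i₀` has at most `k + 1`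
elements, `X` restricted to it is itself a Gram matrix in `ℝ^(k+1)`; this realization and the
inductive one have the same Gram matrix on `B i₀ \ {v}`, so an isometry of `ℝ^(k+1)` maps one
onto the other, and the image of the vector of `v` extends the inductive family. The Gram matrix
of the final family has rank at most `k + 1` and agrees with `X` on the diagonal and on the
edges of `G`.
-/

open scoped InnerProductSpace ComplexOrder
open Module

section GramRealization

variable {𝕜 E : Type*} [RCLike 𝕜] [NormedAddCommGroup E] [InnerProductSpace 𝕜 E]

theorem inner_linearCombination_eq_of_inner_eq {α : Type*} {z y : α → E}
    (h : ∀ a b, ⟪z a, z b⟫_𝕜 = ⟪y a, y b⟫_𝕜) (c d : α →₀ 𝕜) :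
    ⟪Finsupp.linearCombination 𝕜 z c, Finsupp.linearCombination 𝕜 z d⟫_𝕜 =
      ⟪Finsupp.linearCombination 𝕜 y c, Finsupp.linearCombination 𝕜 y d⟫_𝕜 := by
  simp [Finsupp.linearCombination_apply, Finsupp.sum, sum_inner, inner_sum, inner_smul_left,
    inner_smul_right, h]

theorem exists_linearIsometry_comp_eq_of_inner_eq [FiniteDimensional 𝕜 E] {α : Type*}
    {z y : α → E} (h : ∀ a b, ⟪z a, z b⟫_𝕜 = ⟪y a, y b⟫_𝕜) :
    ∃ f : E →ₗᵢ[𝕜] E, f ∘ z = y := by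
  set L := Finsupp.linearCombination 𝕜 z
  set M := Finsupp.linearCombination 𝕜 y
  have hLM := inner_linearCombination_eq_of_inner_eq h
  have hker : LinearMap.ker L ≤ LinearMap.ker M := fun c hc ↦ by
    rw [LinearMap.mem_ker] at hc ⊢
    rw [← inner_self_eq_zero (𝕜 := 𝕜), ← hLM, hc, inner_zero_left]
  let g : LinearMap.range L →ₗ[𝕜] E :=
    (LinearMap.ker L).liftQ M hker ∘ₗ L.quotKerEquivRange.symm.toLinearMap
  have hg : ∀ c, g ⟨L c, LinearMap.mem_range_self L c⟩ = M c := fun c ↦ by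
    simp [g, L.quotKerEquivRange_symm_apply_image]
  have hg_norm : ∀ w, ‖g w‖ = ‖(w : E)‖ := by
    rintro ⟨_, c, rfl⟩
    rw [hg, @norm_eq_sqrt_re_inner 𝕜, @norm_eq_sqrt_re_inner 𝕜, hLM]
  let f₀ : LinearMap.range L →ₗᵢ[𝕜] E := ⟨g, hg_norm⟩
  refine ⟨f₀.extend, funext fun a ↦ ?_⟩
  have key : f₀.extend (L (Finsupp.single a 1)) = M (Finsupp.single a 1) :=
    (f₀.extend_apply ⟨_, LinearMap.mem_range_self L _⟩).trans (hg _)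
  simpa [L, M] using key

theorem Matrix.PosSemidef.exists_gram_eq [FiniteDimensional 𝕜 E] {α : Type*} [Fintype α]
    {X : Matrix α α 𝕜} (hX : X.PosSemidef) (hcard : Fintype.card α ≤ finrank 𝕜 E) :
    ∃ z : α → E, Matrix.gram 𝕜 z = X := by
  classical
  open scoped MatrixOrder in
  obtain ⟨A, rfl⟩ := CStarAlgebra.nonneg_iff_eq_star_mul_self.mp hX.nonneg
  obtain ⟨e⟩ : Nonempty (α ↪ Fin (finrank 𝕜 E)) :=
    Function.Embedding.nonempty_of_card_le (by simpa using hcard)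
  have hv := (stdOrthonormalBasis 𝕜 E).orthonormal.comp e e.injective
  refine ⟨fun a ↦ ∑ c, A c a • stdOrthonormalBasis 𝕜 E (e c), ?_⟩
  ext a b
  have := hv.inner_sum (fun c ↦ A c a) (fun c ↦ A c b) Finset.univ
  simp only [Function.comp_apply] at this
  rw [Matrix.gram_apply, this]
  simp [Matrix.mul_apply]

theorem Matrix.rank_gram_le_finrank [FiniteDimensional 𝕜 E] {α : Type*} [Fintype α]
    (v : α → E) : (Matrix.gram 𝕜 v).rank ≤ finrank 𝕜 E := by
  rw [Matrix.gram_eq_conjTranspose_mul (stdOrthonormalBasis 𝕜 E)]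
  exact (Matrix.rank_mul_le_right _ _).trans ((Matrix.rank_le_card_height _).trans (by simp))

theorem exists_inner_update_eq [FiniteDimensional 𝕜 E] {V : Type*} [DecidableEq V]
    {X : Matrix V V 𝕜} (hX : X.PosSemidef) {C : Set V} (hC : C.Finite)
    (hcard : C.ncard ≤ finrank 𝕜 E) {v : V} (hv : v ∈ C) (y : V → E)
    (hy : ∀ a ∈ C, ∀ b ∈ C, a ≠ v → b ≠ v → ⟪y a, y b⟫_𝕜 = X a b) :
    ∃ e : E, ∀ a ∈ C, ∀ b ∈ C, ⟪Function.update y v e a, Function.update y v e b⟫_𝕜 = X a b := by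
  have := hC.fintype
  obtain ⟨z, hz⟩ := (hX.submatrix ((↑) : C → V)).exists_gram_eq (E := E)
    (by rwa [← Nat.card_eq_fintype_card, Nat.card_coe_set_eq])
  have hzX : ∀ a b : C, ⟪z a, z b⟫_𝕜 = X a b := fun a b ↦ by
    rw [← Matrix.gram_apply, hz, Matrix.submatrix_apply]
  obtain ⟨f, hf⟩ := exists_linearIsometry_comp_eq_of_inner_eq
    (z := fun a : {a : C // (a : V) ≠ v} ↦ z a) (y := fun a ↦ y a)
    fun a b ↦ by rw [hzX, hy _ a.1.2 _ b.1.2 a.2 b.2]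
  have hupdate : ∀ a : C, Function.update y v (f (z ⟨v, hv⟩)) a = f (z a) := by
    rintro ⟨a, ha⟩
    by_cases hav : a = v
    · subst hav
      simp
    · simp [hav, ← congrFun hf ⟨⟨a, ha⟩, hav⟩]
  refine ⟨f (z ⟨v, hv⟩), fun a ha b hb ↦ ?_⟩
  rw [hupdate ⟨a, ha⟩, hupdate ⟨b, hb⟩, f.inner_map_map, hzX]

end GramRealization

namespace SimpleGraph

variable {ι : Type*} {T : SimpleGraph ι} {S : Set ι}

theorem Connected.exists_isPath_forall_mem_of_induce (hS : (T.induce S).Connected) {a b : ι}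
    (ha : a ∈ S) (hb : b ∈ S) : ∃ p : T.Walk a b, p.IsPath ∧ ∀ x ∈ p.support, x ∈ S := by
  obtain ⟨p, hp⟩ := hS.exists_isPath ⟨a, ha⟩ ⟨b, hb⟩
  refine ⟨p.map (Embedding.induce S).toHom, hp.map (Embedding.induce (G := T) S).injective, ?_⟩
  intro x hx
  obtain ⟨y, -, rfl⟩ := List.mem_map.mp (Walk.support_map _ p ▸ hx)
  exact y.2

theorem Walk.dist_lt_of_mem_support {r t x : ι} {g : T.Walk r t} (hg : g.length = T.dist r t)
    (hx : x ∈ g.support) (hxt : x ≠ t) : T.dist r x < T.dist r t := by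
  classical
  exact (dist_le _).trans_lt (hg ▸ Walk.length_takeUntil_lt_length hx hxt)

theorem IsAcyclic.exists_eq_append_of_forall_dist_le (hT : T.IsAcyclic)
    (hS : (T.induce S).Connected) {r t j : ι} (ht : t ∈ S) (hj : j ∈ S)
    (hmin : ∀ i ∈ S, T.dist r t ≤ T.dist r i) {q : T.Walk r j} (hq : q.IsPath) :
    ∃ (g : T.Walk r t) (p : T.Walk t j),
      g.length = T.dist r t ∧ (∀ x ∈ p.support, x ∈ S) ∧ q = g.append p := by
  obtain ⟨p, hp, hpS⟩ := hS.exists_isPath_forall_mem_of_induce ht hj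
  obtain ⟨g, hg, hgl⟩ := (q.reachable.trans p.reverse.reachable).exists_path_of_dist
  refine ⟨g, p, hgl, hpS, congrArg Subtype.val
    ((hT.subsingleton_path r j).elim ⟨q, hq⟩ ⟨g.append p, ?_⟩)⟩
  rw [Walk.isPath_def, Walk.support_append, List.nodup_append]
  refine ⟨hg.support_nodup, hp.support_nodup.sublist (List.tail_sublist _),
    fun x hxg y hyp hxy ↦ ?_⟩
  subst hxy
  have hxt : x ≠ t := by
    rintro rfl
    have hnodup := hp.support_nodup
    rw [← p.cons_tail_support] at hnodup
    exact (List.nodup_cons.mp hnodup).1 hyp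
  exact (hmin x (hpS x (List.mem_of_mem_tail hyp))).not_gt
    (Walk.dist_lt_of_mem_support hgl hxg hxt)

end SimpleGraph

section TreeDecomposition

open SimpleGraph

variable {V ι : Type*} {T : SimpleGraph ι} {B : ι → Set V}

/-- Root the tree at `r` and let `top v` be a bag of `v` nearest to `r`. A vertex `v` whose top bag
is farthest from `r` works: if `w` shares a bag `j` with `v`, the path from `r` to `j` passes
through `top w` and then `top v`, and the bags of `w` contain the path from `top w` onwards. -/
theorem exists_mem_bag_forall_bagmate_mem (hpre : T.Preconnected) (hT : T.IsAcyclic)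
    (hsub : ∀ v, (T.induce {i | v ∈ B i}).Connected) {S : Finset V} (hS : S.Nonempty)
    (hcov : ∀ v ∈ S, ∃ i, v ∈ B i) :
    ∃ v ∈ S, ∃ i₀, v ∈ B i₀ ∧ ∀ w ∈ S, ∀ j, v ∈ B j → w ∈ B j → w ∈ B i₀ := by
  obtain ⟨v₁, hv₁⟩ := hS
  obtain ⟨r, -⟩ := hcov v₁ hv₁
  have htop : ∀ v ∈ S, ∃ i, v ∈ B i ∧ ∀ j, v ∈ B j → T.dist r i ≤ T.dist r j := fun v hv ↦ by
    obtain ⟨i, hi, hmin⟩ :=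
      (measure (T.dist r)).wf.has_min {i | v ∈ B i} (hcov v hv)
    exact ⟨i, hi, fun j hj ↦ not_lt.mp (hmin j hj)⟩
  have : Nonempty ι := ⟨r⟩
  choose! top htop_mem htop_min using htop
  obtain ⟨v, hvS, hvmax⟩ := S.exists_max_image (fun v ↦ T.dist r (top v)) ⟨v₁, hv₁⟩
  refine ⟨v, hvS, top v, htop_mem v hvS, fun w hwS j hvj hwj ↦ ?_⟩
  obtain ⟨q, hq⟩ := (hpre r j).exists_isPath
  obtain ⟨_, p, -, -, hqv⟩ :=
    hT.exists_eq_append_of_forall_dist_le (hsub v) (htop_mem v hvS) hvj (htop_min v hvS) hq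
  obtain ⟨g, p', hg, hp', hqw⟩ :=
    hT.exists_eq_append_of_forall_dist_le (hsub w) (htop_mem w hwS) hwj (htop_min w hwS) hq
  have htop_v : top v ∈ (g.append p').support := by
    rw [← hqw, hqv]
    exact (Walk.mem_support_append_iff _ _).mpr (Or.inr p.start_mem_support)
  rcases (Walk.mem_support_append_iff _ _).mp htop_v with hvg | hvp'
  · by_contra hw
    have hne : top v ≠ top w := fun h ↦ hw (h ▸ htop_mem w hwS)
    exact (hvmax w hwS).not_gt (Walk.dist_lt_of_mem_support hg hvg hne)
  · exact hp' _ hvp'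

theorem exists_inner_eq_of_mem_bags {𝕜 E : Type*} [RCLike 𝕜] [NormedAddCommGroup E]
    [InnerProductSpace 𝕜 E] [FiniteDimensional 𝕜 E] [Finite V] (hpre : T.Preconnected)
    (hT : T.IsAcyclic) (hsub : ∀ v, (T.induce {i | v ∈ B i}).Connected)
    (hcov : ∀ v, ∃ i, v ∈ B i) (hsize : ∀ i, (B i).ncard ≤ finrank 𝕜 E)
    {X : Matrix V V 𝕜} (hX : X.PosSemidef) :
    ∃ y : V → E, ∀ u w, (∃ i, u ∈ B i ∧ w ∈ B i) → ⟪y u, y w⟫_𝕜 = X u w := by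
  classical
  have := Fintype.ofFinite V
  suffices ∀ S : Finset V, ∃ y : V → E, ∀ u ∈ S, ∀ w ∈ S,
      (∃ i, u ∈ B i ∧ w ∈ B i) → ⟪y u, y w⟫_𝕜 = X u w by
    obtain ⟨y, hy⟩ := this Finset.univ
    exact ⟨y, fun u w ↦ hy u (Finset.mem_univ u) w (Finset.mem_univ w)⟩
  intro S
  induction S using Finset.strongInduction with
  | H S ih =>
  rcases S.eq_empty_or_nonempty with rfl | hS
  · exact ⟨0, by simp⟩
  obtain ⟨v, hvS, i₀, hvi₀, hgood⟩ :=
    exists_mem_bag_forall_bagmate_mem hpre hT hsub hS fun v _ ↦ hcov v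
  obtain ⟨y, hy⟩ := ih (S.erase v) (Finset.erase_ssubset hvS)
  obtain ⟨e, he⟩ := exists_inner_update_eq hX (C := B i₀ ∩ S) (S.finite_toSet.inter_of_right _)
    ((Set.ncard_inter_le_ncard_left _ _ (Set.toFinite _)).trans (hsize i₀)) ⟨hvi₀, hvS⟩ y
    fun a ha b hb hav hbv ↦ hy a (Finset.mem_erase.mpr ⟨hav, ha.2⟩) b
      (Finset.mem_erase.mpr ⟨hbv, hb.2⟩) ⟨i₀, ha.1, hb.1⟩
  refine ⟨Function.update y v e, fun u hu w hw ⟨j, huj, hwj⟩ ↦ ?_⟩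
  by_cases huv : u = v
  · subst huv
    exact he u ⟨hvi₀, hu⟩ w ⟨hgood w hw j huj hwj, hw⟩
  by_cases hwv : w = v
  · subst hwv
    exact he u ⟨hgood u hu j hwj huj, hu⟩ w ⟨hvi₀, hw⟩
  rw [Function.update_of_ne huv, Function.update_of_ne hwv]
  exact hy u (Finset.mem_erase.mpr ⟨huv, hu⟩) w (Finset.mem_erase.mpr ⟨hwv, hw⟩) ⟨j, huj, hwj⟩

end TreeDecomposition

theorem hasTreeDecompositionOfWidth_card_sub_one {V : Type*} [Finite V] (G : SimpleGraph V) :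
    HasTreeDecompositionOfWidth G (Nat.card V - 1) := by
  refine ⟨Unit, ⊥, fun _ ↦ Set.univ, ⟨.of_subsingleton⟩, SimpleGraph.isAcyclic_bot,
    fun _ ↦ ⟨(), trivial⟩, fun _ _ _ ↦ ⟨(), trivial, trivial⟩,
    fun _ ↦ (SimpleGraph.connected_iff_exists_forall_reachable _).mpr
      ⟨⟨(), trivial⟩, fun _ ↦ .of_subsingleton⟩,
    fun _ ↦ ?_⟩
  rw [Set.ncard_univ]
  omega

theorem hasTreeDecompositionOfWidth_treewidth {V : Type*} [Finite V] (G : SimpleGraph V) :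
    HasTreeDecompositionOfWidth G (treewidth G) :=
  Nat.sInf_mem (s := {k | HasTreeDecompositionOfWidth G k})
    ⟨_, hasTreeDecompositionOfWidth_card_sub_one G⟩

/-- For any graph `G`, `gd(G) ≤ tw(G) + 1`. -/
theorem gramDim_le_treewidth_add_one {V : Type*} [Fintype V] (G : SimpleGraph V) :
    gramDim G ≤ treewidth G + 1 := by
  obtain ⟨ι, T, B, hconn, hT, hcov, hedge, hsub, hsize⟩ := hasTreeDecompositionOfWidth_treewidth G
  refine Nat.sInf_le fun X hX ↦ ?_
  obtain ⟨y, hy⟩ := exists_inner_eq_of_mem_bags (E := EuclideanSpace ℝ (Fin (treewidth G + 1)))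
    hconn.preconnected hT hsub hcov (by simpa using hsize) hX
  refine ⟨Matrix.gram ℝ y, Matrix.posSemidef_gram ℝ y,
    (Matrix.rank_gram_le_finrank y).trans (by simp), fun u ↦ ?_, fun u w huw ↦ ?_⟩
  · obtain ⟨i, hi⟩ := hcov u
    exact hy u u ⟨i, hi, hi⟩
  · exact hy u w (hedge u w huw)
end

section
/- The complete tripartite graph K_{2,2,2} has Gram dimension exactly 5. Specifically: (a) there exists a vector a ∈ E(K_{2,2,2}) (a partial correlation matrix specified on the edges of K_{2,2,2}) with a unique psd completion of rank 5, showing gd(K_{2,2,2}) ≥ 5; (b) K_{2,2,2} has tree-width 4, so gd(K_{2,2,2}) ≤ 5. -/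
/-- The complete tripartite graph `K_{2,2,2}`, obtained from `K₆` by deleting the perfect
matching `(0,3), (1,4), (2,5)`. -/
def K222 : SimpleGraph (Fin 6) :=
  (⊤ : SimpleGraph (Fin 6)).deleteEdges {s(0, 3), s(1, 4), s(2, 5)}

/-!
Upper bound: a singular psd `X` has rank at most 5 itself. If `X` is positive definite, take its
Schur complement `S` onto the non-adjacent pair `{0, 3}` and replace `S` by the rank-one psd
matrix with the same diagonal. This changes only the entries `X₀₃ = X₃₀` and makes the
determinant vanish.

Lower bound: in any psd completion `Y` of the witness `X`, the vector `u = e₃ + e₄ - √2 e₅` is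
supported on the triangle `{3, 4, 5}`, so `uᵀ Y u = uᵀ X u = 0` and hence `Y u = 0`; each of the
rows `0, 1, 2` of `Y u = 0` involves exactly one unspecified entry, which is thereby determined.

Tree-width: the bags `V ∖ {3}` and `V ∖ {0}` give width 4. In a decomposition of width 3 the
subtrees of adjacent vertices meet. If the subtrees of each class `{u, u + 3}` meet as well, the
Helly property of subtrees puts all six vertices in one bag. Otherwise the bag where the subtree
of `u` is left on the way to that of `u + 3` contains every vertex except `u + 3`.
-/

open Matrix

namespace Matrix

variable {n m o : Type*} [Fintype n] [DecidableEq n]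

theorem rank_lt_card_of_det_eq_zero {K : Type*} [Field K] {M : Matrix n n K} (h : M.det = 0) :
    M.rank < Fintype.card n := by
  obtain ⟨v, hv, hMv⟩ := exists_mulVec_eq_zero_iff.mpr h
  have hker : LinearMap.ker M.mulVecLin ≠ ⊥ :=
    fun hbot => hv <| by simpa [hbot] using (LinearMap.mem_ker (f := M.mulVecLin)).mpr hMv
  have hsum := LinearMap.finrank_range_add_finrank_ker M.mulVecLin
  rw [Module.finrank_fintype_fun_eq_card] at hsum
  have := Submodule.finrank_eq_zero.not.mpr hker
  unfold rank
  omega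

theorem PosSemidef.posDef_of_det_ne_zero {M : Matrix n n ℝ} (hM : M.PosSemidef) (h : M.det ≠ 0) :
    M.PosDef :=
  hM.posDef_iff_isUnit.mpr <| (isUnit_iff_isUnit_det M).mpr h.isUnit

theorem PosDef.exists_posSemidef_det_eq_zero [Fintype m] [DecidableEq m] [Fintype o]
    [DecidableEq o] [Nontrivial o] {M : Matrix (m ⊕ o) (m ⊕ o) ℝ} (hM : M.PosDef) :
    ∃ N : Matrix (m ⊕ o) (m ⊕ o) ℝ, N.PosSemidef ∧ N.det = 0 ∧ (∀ a, N a a = M a a) ∧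
      ∀ a b, a.isLeft ∨ b.isLeft → N a b = M a b := by
  set A := M.toBlocks₁₁
  set B := M.toBlocks₁₂
  set D := M.toBlocks₂₂
  have hC : Bᴴ = M.toBlocks₂₁ := by
    have h := hM.isHermitian
    rw [← fromBlocks_toBlocks M, isHermitian_fromBlocks_iff] at h
    exact h.2.1
  have hM_eq : M = fromBlocks A B Bᴴ D := by rw [hC]; exact (fromBlocks_toBlocks M).symm
  have hA : A.PosDef := hM.submatrix Sum.inl_injective
  have := hA.isUnit.invertible
  set S := D - Bᴴ * A⁻¹ * B
  have hS : S.PosSemidef := (hA.fromBlocks₁₁ B D).mp (hM_eq ▸ hM.posSemidef)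
  set w : o → ℝ := fun k => √(S k k)
  refine ⟨fromBlocks A B Bᴴ (Bᴴ * A⁻¹ * B + vecMulVec w w), ?_, ?_, ?_, ?_⟩
  · refine (hA.fromBlocks₁₁ B _).mpr ?_
    simpa using posSemidef_vecMulVec_self_star w
  · rw [det_fromBlocks₁₁, invOf_eq_nonsing_inv, add_sub_cancel_left, det_vecMulVec, mul_zero]
  · rw [hM_eq]
    rintro (a | k)
    · rfl
    · rw [fromBlocks_apply₂₂, fromBlocks_apply₂₂, add_apply, vecMulVec_apply,
        Real.mul_self_sqrt hS.diag_nonneg]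
      simp [S]
  · rw [hM_eq]
    rintro (a | a) (b | b) h <;> simp_all

end Matrix

section GramDimension

variable {V : Type*} [Fintype V] {G : SimpleGraph V} {X Y : Matrix V V ℝ}

theorem Matrix.PosSemidef.mulVec_eq_zero_of_agreesOn (hY : Y.PosSemidef) (hXY : agreesOn G X Y)
    {u : V → ℝ} (hu : ∀ i j, i ≠ j → u i ≠ 0 → u j ≠ 0 → G.Adj i j) (hXu : X *ᵥ u = 0) :
    Y *ᵥ u = 0 := by
  have hquad : u ⬝ᵥ (Y *ᵥ u) = u ⬝ᵥ (X *ᵥ u) := by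
    simp only [dotProduct, mulVec, Finset.mul_sum]
    refine Finset.sum_congr rfl fun i _ => Finset.sum_congr rfl fun j _ => ?_
    by_cases hi : u i = 0
    · simp [hi]
    by_cases hj : u j = 0
    · simp [hj]
    rcases eq_or_ne i j with rfl | hij
    · rw [hXY.1]
    · rw [hXY.2 i j (hu i j hij hi hj)]
  rw [← hY.dotProduct_mulVec_zero_iff]
  simpa [hXu] using hquad

theorem agreesOn.apply_eq_of_mulVec_eq (hXY : agreesOn G X Y) {u : V → ℝ}
    (hu : Y *ᵥ u = X *ᵥ u) {i j : V} (hj : ∀ k, k ≠ j → k = i ∨ G.Adj i k) (huj : u j ≠ 0) :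
    Y i j = X i j := by
  have hrow : ∑ k, (Y i k - X i k) * u k = 0 := by
    have := congrFun hu i
    rw [← sub_eq_zero, mulVec, mulVec, dotProduct, dotProduct, ← Finset.sum_sub_distrib] at this
    simpa [sub_mul] using this
  rw [Finset.sum_eq_single j (fun k _ hk => ?_) (by simp)] at hrow
  · simpa [sub_eq_zero, huj] using hrow
  · rcases hj k hk with rfl | h
    · simp [hXY.1]
    · simp [hXY.2 i k h]

theorem gramDimLE.mono {k l : ℕ} (h : gramDimLE G k) (hkl : k ≤ l) : gramDimLE G l :=
  fun X hX => (h X hX).imp fun _ ⟨hY, hrank, hXY⟩ => ⟨hY, hrank.trans hkl, hXY⟩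

theorem gramDimLE.rank_le {k : ℕ} (h : gramDimLE G k) (hX : X.PosSemidef)
    (huniq : ∀ Y : Matrix V V ℝ, Y.PosSemidef → agreesOn G X Y → Y = X) : X.rank ≤ k := by
  obtain ⟨Y, hY, hrank, hXY⟩ := h X hX
  rwa [← huniq Y hY hXY]

theorem gramDim_eq_succ {k : ℕ}
    (h : gramDimLE G (k + 1)) (h' : ¬gramDimLE G k) : gramDim G = k + 1 :=
  (Nat.sInf_upward_closed_eq_succ_iff (fun _ _ hle h => h.mono hle) k).mpr ⟨h, h'⟩

theorem gramDimLE_card_sub_one_of_not_adj [DecidableEq V] {i j : V} (hij : i ≠ j)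
    (hG : ¬G.Adj i j) :
    gramDimLE G (Fintype.card V - 1) := by
  intro X hX
  by_cases hdet : X.det = 0
  · exact ⟨X, hX, Nat.le_sub_one_of_lt (rank_lt_card_of_det_eq_zero hdet), fun _ => rfl,
      fun _ _ _ => rfl⟩
  let p : V → Prop := fun k => k ≠ i ∧ k ≠ j
  have : Nontrivial {k // ¬p k} :=
    ⟨⟨i, by simp [p]⟩, ⟨j, by simp [p]⟩, by simpa [Subtype.ext_iff] using hij⟩
  let e := Equiv.sumCompl p
  obtain ⟨N, hN, hdetN, hdiag, hoff⟩ :=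
    ((hX.posDef_of_det_ne_zero hdet).submatrix e.injective).exists_posSemidef_det_eq_zero
  refine ⟨N.submatrix e.symm e.symm, hN.submatrix _, ?_, fun a => by simpa using hdiag (e.symm a),
    fun a b hab => ?_⟩
  · refine Nat.le_sub_one_of_lt (rank_lt_card_of_det_eq_zero ?_)
    rw [det_submatrix_equiv_self, hdetN]
  · suffices p a ∨ p b by
      simpa using hoff (e.symm a) (e.symm b) (by
        rcases this with h | h <;> simp [e, Equiv.sumCompl_symm_apply_of_pos h])
    by_contra! h
    simp only [p, not_and_or, not_not] at h
    rcases h with ⟨rfl | rfl, rfl | rfl⟩ <;> simp_all [G.adj_symm]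

end GramDimension

namespace SimpleGraph

variable {ι : Type*} {T : SimpleGraph ι} {S S' : Set ι}

def IsPathClosed (T : SimpleGraph ι) (S : Set ι) : Prop :=
  ∀ ⦃a b⦄, a ∈ S → b ∈ S → ∀ p : T.Walk a b, p.IsPath → ∀ x ∈ p.support, x ∈ S

theorem IsPathClosed.inter (hS : T.IsPathClosed S) (hS' : T.IsPathClosed S') :
    T.IsPathClosed (S ∩ S') := fun _ _ ha hb p hp x hx =>
  ⟨hS ha.1 hb.1 p hp x hx, hS' ha.2 hb.2 p hp x hx⟩

theorem IsAcyclic.support_subset_of_isPath (hT : T.IsAcyclic) {a b : ι} {p : T.Walk a b}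
    (hp : p.IsPath) (q : T.Walk a b) : p.support ⊆ q.support := by
  classical
  obtain rfl : p = q.bypass :=
    congrArg Subtype.val <| (hT.subsingleton_path a b).elim ⟨p, hp⟩ ⟨_, q.bypass_isPath⟩
  exact q.support_bypass_subset_support

theorem IsAcyclic.isPathClosed_of_preconnected (hT : T.IsAcyclic)
    (hS : (T.induce S).Preconnected) : T.IsPathClosed S := by
  intro a b ha hb p hp x hx
  obtain ⟨q⟩ := hS ⟨a, ha⟩ ⟨b, hb⟩
  have hq : ∀ y ∈ q.support.map (Embedding.induce (G := T) S).toHom, y ∈ S := by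
    simp only [List.mem_map]
    rintro _ ⟨⟨y, hy⟩, -, rfl⟩
    exact hy
  exact hq x (by rw [← Walk.support_map]; exact hT.support_subset_of_isPath hp _ hx)

theorem IsPathClosed.mem_or_mem_of_adj (hT : T.IsTree) (hS : T.IsPathClosed S)
    (hS' : T.IsPathClosed S') (hSS' : (S ∩ S').Nonempty) {u v : ι} (hu : u ∈ S) (hv : v ∈ S')
    (huv : T.Adj u v) : u ∈ S' ∨ v ∈ S := by
  obtain ⟨d, hdS, hdS'⟩ := hSS'
  obtain ⟨p, hp⟩ := hT.connected.exists_isPath d u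
  obtain ⟨q, hq⟩ := hT.connected.exists_isPath d v
  by_cases huq : u ∈ q.support
  · exact .inl (hS' hdS' hv q hq u huq)
  · exact .inr (hS hdS hu p hp v (hT.isAcyclic.mem_support_of_ne_mem_support_of_adj_of_isPath
      hp hq huv huq))

theorem IsPathClosed.inter_inter_nonempty (hT : T.IsTree) {S₁ S₂ S₃ : Set ι}
    (h₁ : T.IsPathClosed S₁) (h₂ : T.IsPathClosed S₂) (h₃ : T.IsPathClosed S₃)
    (h₁₂ : (S₁ ∩ S₂).Nonempty) (h₁₃ : (S₁ ∩ S₃).Nonempty) (h₂₃ : (S₂ ∩ S₃).Nonempty) :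
    (S₁ ∩ S₂ ∩ S₃).Nonempty := by
  obtain ⟨c, hc₁, hc₂⟩ := h₁₂
  obtain ⟨b, hb₁, hb₃⟩ := h₁₃
  obtain ⟨d, hd₂, hd₃⟩ := h₂₃
  by_cases hc₃ : c ∈ S₃
  · exact ⟨c, ⟨hc₁, hc₂⟩, hc₃⟩
  obtain ⟨p, hp⟩ := hT.connected.exists_isPath b c
  obtain ⟨q₁, hq₁⟩ := hT.connected.exists_isPath b d
  obtain ⟨q₂, hq₂⟩ := hT.connected.exists_isPath d c
  -- the path from `b` to `c` runs inside `S₂ ∪ S₃`, since the detour through `d` does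
  have hp₂₃ : ∀ x ∈ p.support, x ∈ S₂ ∨ x ∈ S₃ := by
    intro x hx
    have := hT.isAcyclic.support_subset_of_isPath hp (q₁.append q₂) hx
    rw [Walk.mem_support_append_iff] at this
    exact this.elim (fun h => .inr (h₃ hb₃ hd₃ q₁ hq₁ x h)) (fun h => .inl (h₂ hd₂ hc₂ q₂ hq₂ x h))
  obtain ⟨e, he, hu₃, hv₃⟩ := p.exists_boundary_dart S₃ hb₃ hc₃
  have hu := p.dart_fst_mem_support_of_mem_darts he
  have hv₂ : e.snd ∈ S₂ := (hp₂₃ _ (p.dart_snd_mem_support_of_mem_darts he)).resolve_right hv₃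
  have hu₂ : e.fst ∈ S₂ :=
    (h₃.mem_or_mem_of_adj hT h₂ ⟨d, hd₃, hd₂⟩ hu₃ hv₂ e.adj).resolve_right hv₃
  exact ⟨e.fst, ⟨h₁ hb₁ hc₁ p hp _ hu, hu₂⟩, hu₃⟩

theorem IsTree.exists_mem_forall_of_pairwise_inter_nonempty {κ : Type*} (hT : T.IsTree)
    {s : Finset κ} (hs : s.Nonempty) {S : κ → Set ι} (hS : ∀ k ∈ s, T.IsPathClosed (S k))
    (hmeet : ∀ k ∈ s, ∀ l ∈ s, (S k ∩ S l).Nonempty) : ∃ x, ∀ k ∈ s, x ∈ S k := by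
  induction hs using Finset.Nonempty.cons_induction generalizing S with
  | singleton a =>
    obtain ⟨x, hx, -⟩ := hmeet a (by simp) a (by simp)
    exact ⟨x, by simpa using hx⟩
  | cons a s ha hs ih =>
    obtain ⟨x, hx⟩ := ih (S := fun k => S k ∩ S a)
      (fun k hk => (hS k (by simp [hk])).inter (hS a (by simp)))
      (fun k hk l hl => by
        rw [Set.inter_inter_inter_comm, Set.inter_self]
        exact IsPathClosed.inter_inter_nonempty hT (hS k (by simp [hk])) (hS l (by simp [hl]))
            (hS a (by simp)) (hmeet k (by simp [hk]) l (by simp [hl]))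
            (hmeet k (by simp [hk]) a (by simp)) (hmeet l (by simp [hl]) a (by simp)))
    obtain ⟨k₀, hk₀⟩ := hs
    refine ⟨x, fun k hk => ?_⟩
    rcases Finset.mem_cons.mp hk with rfl | hk
    exacts [(hx k₀ hk₀).2, (hx k hk).1]

theorem Walk.IsPath.exists_adj_notMem_edges {a b : ι} {p : T.Walk a b} (hp : p.IsPath)
    (ha : a ∈ S) (hb : b ∉ S) :
    ∃ x ∈ S, ∃ y ∉ S, T.Adj x y ∧ ∃ q : T.Walk y b, s(x, y) ∉ q.edges := by
  induction p with
  | nil => exact absurd ha hb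
  | @cons a c b h p ih =>
    rw [Walk.cons_isPath_iff] at hp
    by_cases hc : c ∈ S
    · exact ih hp.1 hc hb
    · exact ⟨a, ha, c, hc, h, p, fun he => hp.2 (p.fst_mem_support_of_mem_edges he)⟩

theorem IsTree.exists_mem_forall_of_disjoint (hT : T.IsTree) (hS : T.IsPathClosed S)
    (hS' : T.IsPathClosed S') (hdisj : Disjoint S S') (hne : S.Nonempty) (hne' : S'.Nonempty) :
    ∃ x ∈ S, ∀ R, T.IsPathClosed R → (R ∩ S).Nonempty → (R ∩ S').Nonempty → x ∈ R := by
  obtain ⟨a, ha⟩ := hne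
  obtain ⟨b, hb⟩ := hne'
  obtain ⟨p, hp⟩ := hT.connected.exists_isPath a b
  obtain ⟨x, hx, y, hy, hxy, q, hq⟩ :=
    hp.exists_adj_notMem_edges ha (Set.disjoint_right.mp hdisj hb)
  refine ⟨x, hx, fun R hR ⟨a', ha'R, ha'S⟩ ⟨b', hb'R, hb'S⟩ => ?_⟩
  obtain ⟨p₁, hp₁⟩ := hT.connected.exists_isPath x a'
  obtain ⟨p₂, hp₂⟩ := hT.connected.exists_isPath a' b'
  obtain ⟨p₃, hp₃⟩ := hT.connected.exists_isPath b' b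
  -- `s(x, y)` is a bridge, so the walk `x ⇝ a' ⇝ b' ⇝ b ⇝ y` crosses it; it can only do so
  -- inside `R`
  have hbridge := isBridge_iff_forall_walk_mem_edges.mp
    (isAcyclic_iff_forall_adj_isBridge.mp hT.isAcyclic hxy)
    (p₁.append (p₂.append (p₃.append q.reverse)))
  simp only [Walk.edges_append, Walk.edges_reverse, List.mem_append, List.mem_reverse] at hbridge
  rcases hbridge with h | h | h | h
  · exact absurd (hS hx ha'S p₁ hp₁ y (p₁.snd_mem_support_of_mem_edges h)) hy
  · exact hR ha'R hb'R p₂ hp₂ x (p₂.fst_mem_support_of_mem_edges h)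
  · exact absurd (hS' hb'S hb p₃ hp₃ x (p₃.fst_mem_support_of_mem_edges h))
      (Set.disjoint_left.mp hdisj hx)
  · exact absurd h hq

end SimpleGraph

theorem HasTreeDecompositionOfWidth.mono {V : Type*} {G : SimpleGraph V} {k l : ℕ}
    (h : HasTreeDecompositionOfWidth G k) (hkl : k ≤ l) : HasTreeDecompositionOfWidth G l := by
  obtain ⟨ι, T, B, hconn, hacyc, hcover, hedge, hsub, hwidth⟩ := h
  exact ⟨ι, T, B, hconn, hacyc, hcover, hedge, hsub, fun i => (hwidth i).trans (by omega)⟩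

theorem treewidth_eq_succ {V : Type*} {G : SimpleGraph V} {k : ℕ}
    (h : HasTreeDecompositionOfWidth G (k + 1)) (h' : ¬HasTreeDecompositionOfWidth G k) :
    treewidth G = k + 1 :=
  (Nat.sInf_upward_closed_eq_succ_iff (fun _ _ hle h => h.mono hle) k).mpr ⟨h, h'⟩

namespace K222

theorem adj_iff {u v : Fin 6} : K222.Adj u v ↔ u ≠ v ∧ v ≠ u + 3 := by
  simp only [K222, SimpleGraph.deleteEdges_adj, SimpleGraph.top_adj, Set.mem_insert_iff,
    Set.mem_singleton_iff, Sym2.eq_iff]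
  revert u v; decide

noncomputable def gramVectors : Matrix (Fin 5) (Fin 6) ℝ :=
  !![1, 0, 0, 0, 0, 0;
     0, 1, 0, 0, 0, 0;
     0, 0, 1, 0, 0, 0;
     0, 0, 0, 1, 0, (√2)⁻¹;
     0, 0, 0, 0, 1, (√2)⁻¹]

noncomputable def gramWitness : Matrix (Fin 6) (Fin 6) ℝ := gramVectorsᵀ * gramVectors

noncomputable def columnDependency : Fin 6 → ℝ := ![0, 0, 0, 1, 1, -√2]

theorem gramVectors_mulVec_columnDependency : gramVectors *ᵥ columnDependency = 0 := by
  ext k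
  fin_cases k <;> simp [gramVectors, columnDependency, mulVec, dotProduct, Fin.sum_univ_succ]

theorem gramWitness_mulVec_columnDependency : gramWitness *ᵥ columnDependency = 0 := by
  rw [gramWitness, ← mulVec_mulVec, gramVectors_mulVec_columnDependency, mulVec_zero]

theorem gramWitness_posSemidef : gramWitness.PosSemidef := by
  simpa [gramWitness] using posSemidef_conjTranspose_mul_self gramVectors

theorem gramWitness_diag (i : Fin 6) : gramWitness i i = 1 := by
  have : (√2)⁻¹ * (√2)⁻¹ = (2 : ℝ)⁻¹ := by rw [← mul_inv, Real.mul_self_sqrt zero_le_two]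
  fin_cases i <;> norm_num [gramWitness, gramVectors, mul_apply, Fin.sum_univ_succ, this]

theorem gramVectors_rank : gramVectors.rank = 5 := by
  refine le_antisymm (rank_le_height _) ?_
  have : gramVectors.submatrix id Fin.castSucc = 1 := by
    ext k l
    fin_cases k <;> fin_cases l <;> rfl
  simpa [this] using rank_submatrix_le gramVectors id Fin.castSucc

theorem gramWitness_rank : gramWitness.rank = 5 := by
  rw [gramWitness, rank_transpose_mul_self, gramVectors_rank]

theorem eq_gramWitness_of_agreesOn {Y : Matrix (Fin 6) (Fin 6) ℝ} (hY : Y.PosSemidef)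
    (hXY : agreesOn K222 gramWitness Y) : Y = gramWitness := by
  have hYu : Y *ᵥ columnDependency = gramWitness *ᵥ columnDependency := by
    rw [gramWitness_mulVec_columnDependency]
    refine hY.mulVec_eq_zero_of_agreesOn hXY (fun i j hij hi hj => ?_)
      gramWitness_mulVec_columnDependency
    rw [adj_iff]
    fin_cases i <;> fin_cases j <;> simp_all [columnDependency]
  have hmatch : ∀ i, columnDependency (i + 3) ≠ 0 → Y i (i + 3) = gramWitness i (i + 3) := by
    refine fun i hu => hXY.apply_eq_of_mulVec_eq hYu (fun k hk => ?_) hu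
    rw [adj_iff, or_iff_not_imp_left]
    exact fun hki => ⟨Ne.symm hki, hk⟩
  have hsymm {M : Matrix (Fin 6) (Fin 6) ℝ} (hM : M.PosSemidef) (i j : Fin 6) : M i j = M j i := by
    simpa using (hM.isHermitian.apply i j).symm
  ext i j
  by_cases hij : i = j ∨ K222.Adj i j
  · rcases hij with rfl | h
    exacts [hXY.1 i, hXY.2 i j h]
  obtain rfl : j = i + 3 := by
    rw [adj_iff] at hij
    tauto
  by_cases hu : columnDependency (i + 3) ≠ 0
  · exact hmatch i hu
  have hi : i + 3 + 3 = i := by fin_cases i <;> rfl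
  have hu' : columnDependency (i + 3 + 3) ≠ 0 := by
    fin_cases i <;> simp_all [columnDependency]
  have := hmatch (i + 3) hu'
  rw [hi] at this
  rw [hsymm hY, hsymm gramWitness_posSemidef, this]

theorem hasTreeDecompositionOfWidth_four : HasTreeDecompositionOfWidth K222 4 := by
  let B : Fin 2 → Set (Fin 6) := ![{3}ᶜ, {0}ᶜ]
  have hcover (v : Fin 6) : ∃ i, v ∈ B i := by
    simp only [B, Fin.exists_fin_two, Matrix.cons_val_zero, Matrix.cons_val_one,
      Set.mem_compl_singleton_iff]
    revert v; decide
  refine ⟨Fin 2, ⊤, B, SimpleGraph.connected_top, SimpleGraph.IsAcyclic.of_card_le_two (by simp),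
    hcover, fun u v huv => ?_, fun v => ?_, ?_⟩
  · simp only [B, Fin.exists_fin_two, Matrix.cons_val_zero, Matrix.cons_val_one,
      Set.mem_compl_singleton_iff]
    rw [adj_iff] at huv
    revert u v; decide
  · rw [← SimpleGraph.completeGraph_eq_top, SimpleGraph.induce_top]
    obtain ⟨i, hi⟩ := hcover v
    have : Nonempty {i | v ∈ B i} := ⟨⟨i, hi⟩⟩
    exact SimpleGraph.connected_top
  · have hcard (a : Fin 6) : ({a}ᶜ : Set (Fin 6)).ncard ≤ 4 + 1 := by
      rw [Set.ncard_compl]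
      simp
    exact Fin.forall_fin_two.mpr ⟨hcard 3, hcard 0⟩

theorem not_hasTreeDecompositionOfWidth_three : ¬HasTreeDecompositionOfWidth K222 3 := by
  rintro ⟨ι, T, B, hconn, hacyc, hcover, hedge, hsub, hwidth⟩
  have hT : T.IsTree := ⟨hconn, hacyc⟩
  set S : Fin 6 → Set ι := fun v => {i | v ∈ B i}
  have hS v : T.IsPathClosed (S v) := hacyc.isPathClosed_of_preconnected (hsub v).preconnected
  have hadj {u v : Fin 6} (huv : u ≠ v) (hv : v ≠ u + 3) : (S u ∩ S v).Nonempty :=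
    hedge u v (adj_iff.mpr ⟨huv, hv⟩)
  suffices ∃ i, ∃ s : Finset (Fin 6), 5 ≤ s.card ∧ ↑s ⊆ B i by
    obtain ⟨i, s, hs, hsB⟩ := this
    have := Set.ncard_le_ncard hsB
    rw [Set.ncard_coe_finset] at this
    linarith [hwidth i]
  by_cases hclasses : ∀ u, (S u ∩ S (u + 3)).Nonempty
  · have hmeet u v : (S u ∩ S v).Nonempty := by
      rcases eq_or_ne u v with rfl | huv
      · obtain ⟨i, hi⟩ := hcover u
        exact ⟨i, hi, hi⟩
      rcases eq_or_ne v (u + 3) with rfl | hv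
      exacts [hclasses u, hadj huv hv]
    obtain ⟨i, hi⟩ := hT.exists_mem_forall_of_pairwise_inter_nonempty Finset.univ_nonempty
      (fun v _ => hS v) (fun u _ v _ => hmeet u v)
    exact ⟨i, Finset.univ, by simp, fun v _ => hi v (Finset.mem_univ v)⟩
  · push Not at hclasses
    obtain ⟨u, hu⟩ := hclasses
    obtain ⟨x, hxu, hx⟩ := hT.exists_mem_forall_of_disjoint (hS u) (hS (u + 3))
      (Set.disjoint_iff_inter_eq_empty.mpr hu)
      (hcover u) (hcover (u + 3))
    refine ⟨x, Finset.univ.erase (u + 3), by simp, fun v hv => ?_⟩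
    rcases eq_or_ne v u with rfl | hvu
    · exact hxu
    have hv3 : v ≠ u + 3 := by simpa using hv
    refine hx (S v) (hS v) (Set.inter_comm _ _ ▸ hadj (Ne.symm hvu) hv3) (hadj hv3 ?_)
    simpa [add_assoc] using hvu.symm

end K222

/-- `K_{2,2,2}` has Gram dimension exactly 5: (a) there is a partial correlation matrix on
`K_{2,2,2}` (given here via a psd matrix `X` with unit diagonal) whose unique psd completion
has rank 5; (b) `K_{2,2,2}` has tree-width 4. -/
theorem gramDim_K222 :
    gramDim K222 = 5 ∧
    (∃ X : Matrix (Fin 6) (Fin 6) ℝ, X.PosSemidef ∧ (∀ i, X i i = 1) ∧ X.rank = 5 ∧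
      ∀ Y : Matrix (Fin 6) (Fin 6) ℝ, Y.PosSemidef → agreesOn K222 X Y → Y = X) ∧
    treewidth K222 = 4 := by
  have hle : gramDimLE K222 5 := gramDimLE_card_sub_one_of_not_adj (i := 0) (j := 3) (by decide)
    (by simp [K222.adj_iff])
  have hnot : ¬gramDimLE K222 4 := fun h => by
    have := h.rank_le K222.gramWitness_posSemidef fun _ => K222.eq_gramWitness_of_agreesOn
    rw [K222.gramWitness_rank] at this
    omega
  exact ⟨gramDim_eq_succ hle hnot,
    ⟨K222.gramWitness, K222.gramWitness_posSemidef, K222.gramWitness_diag, K222.gramWitness_rank,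
      fun _ => K222.eq_gramWitness_of_agreesOn⟩,
    treewidth_eq_succ K222.hasTreeDecompositionOfWidth_four
      K222.not_hasTreeDecompositionOfWidth_three⟩
end

section
/- Let θ₁,...,θ_n ∈ [0, π] and let a = (cos θ₁,...,cos θ_n) be an assignment to the edges of the n-cycle C_n. Then there exist unit vectors u₁,...,u_n ∈ R² with uᵢᵀu_{i+1} = cos θᵢ for all i (indices mod n) if and only if there exist signs ε ∈ {±1}^n and an integer k with Σᵢ εᵢθᵢ = 2kπ. -/
/-!
Unit vectors in `ℝ²` are exactly the vectors `(cos φ, sin φ)` for angles `φ ∈ ℝ/2πℤ`, and the inner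
product of two of them is the cosine of the difference of their angles. Since `cos φ = cos θ` iff
`φ = ±θ` in `ℝ/2πℤ`, a representation of the cycle is the same as angles `φᵢ` with
`φᵢ₊₁ - φᵢ = εᵢθᵢ` in `ℝ/2πℤ`. Around a cycle, prescribed differences are realizable exactly when
they sum to zero, i.e. when `Σ εᵢθᵢ ∈ 2πℤ`.
-/

open Real

theorem exists_forall_add_one_sub_eq_iff_sum_eq_zero {G : Type*} [AddCommGroup G] {n : ℕ}
    [NeZero n] (f : Fin n → G) :
    (∃ φ : Fin n → G, ∀ i, φ (i + 1) - φ i = f i) ↔ ∑ i, f i = 0 := by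
  constructor
  · rintro ⟨φ, hφ⟩
    rw [← Finset.sum_congr rfl fun i _ => hφ i, Finset.sum_sub_distrib]
    exact sub_eq_zero.mpr (Equiv.sum_comp (Equiv.addRight 1) φ)
  · intro hf
    obtain ⟨m, rfl⟩ := Nat.exists_eq_add_one_of_ne_zero (NeZero.ne n)
    refine ⟨fun i => Fin.partialSum f i.castSucc, fun i => ?_⟩
    cases i using Fin.lastCases with
    | last =>
      have hlast : Fin.partialSum f (Fin.last (m + 1)) = ∑ i, f i := by
        simp [Fin.partialSum, List.take_of_length_le, List.sum_ofFn, Fin.sum_univ_succ]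
      rw [← Fin.succ_last, Fin.partialSum_succ, hf] at hlast
      simp only [Fin.last_add_one, Fin.castSucc_zero, Fin.partialSum_zero]
      rw [zero_sub, neg_eq_iff_eq_neg]
      exact eq_neg_of_add_eq_zero_left hlast
    | cast j =>
      simp only [Fin.coeSucc_eq_succ, ← Fin.succ_castSucc, Fin.partialSum_succ,
        add_sub_cancel_left]

namespace Real.Angle

theorem sum_coe_eq_zero_iff {ι : Type*} (s : Finset ι) (f : ι → ℝ) :
    ∑ i ∈ s, (f i : Angle) = 0 ↔ ∃ k : ℤ, ∑ i ∈ s, f i = 2 * k * π := by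
  rw [← coe_coeHom, ← map_sum, coe_coeHom, coe_eq_zero_iff]
  refine exists_congr fun k => ?_
  rw [zsmul_eq_mul, eq_comm, mul_left_comm, mul_assoc]

theorem cos_eq_cos_coe_iff (a : Angle) (t : ℝ) :
    a.cos = Real.cos t ↔ ∃ ε : ℝ, (ε = 1 ∨ ε = -1) ∧ a = ↑(ε * t) := by
  rw [← cos_coe, cos_eq_iff_eq_or_eq_neg]
  constructor
  · rintro (h | h)
    · exact ⟨1, .inl rfl, by simpa using h⟩
    · exact ⟨-1, .inr rfl, by simpa using h⟩
  · rintro ⟨ε, rfl | rfl, rfl⟩ <;> simp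

noncomputable def unitVec (a : Angle) : EuclideanSpace ℝ (Fin 2) := !₂[a.cos, a.sin]

theorem norm_unitVec (a : Angle) : ‖unitVec a‖ = 1 := by
  simp [unitVec, EuclideanSpace.norm_eq, Fin.sum_univ_two, cos_sq_add_sin_sq]

theorem inner_unitVec (a b : Angle) : inner ℝ (unitVec a) (unitVec b) = (b - a).cos := by
  induction a using Real.Angle.induction_on
  induction b using Real.Angle.induction_on
  simp [unitVec, PiLp.inner_apply, Fin.sum_univ_two, ← coe_sub, Real.cos_sub]

theorem exists_unitVec_eq {u : EuclideanSpace ℝ (Fin 2)} (hu : ‖u‖ = 1) :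
    ∃ a, unitVec a = u := by
  obtain ⟨z, rfl⟩ := Complex.orthonormalBasisOneI.repr.surjective u
  rw [LinearIsometryEquiv.norm_map] at hu
  have hz : z ≠ 0 := norm_ne_zero_iff.mp (by rw [hu]; norm_num)
  refine ⟨z.arg, ?_⟩
  ext i
  fin_cases i <;>
    simp [unitVec, Complex.cos_arg hz, Complex.sin_arg, hu,
      Complex.orthonormalBasisOneI_repr_apply]

end Real.Angle

theorem cycle_gram_representation_iff_general (n : ℕ) [NeZero n]
    (θ : Fin n → ℝ) :
    (∃ u : Fin n → EuclideanSpace ℝ (Fin 2),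
      (∀ i, ‖u i‖ = 1) ∧
      ∀ i : Fin n, (inner ℝ (u i) (u (i + 1)) : ℝ) = Real.cos (θ i)) ↔
    (∃ (ε : Fin n → ℝ) (k : ℤ), (∀ i, ε i = 1 ∨ ε i = -1) ∧
      ∑ i, ε i * θ i = 2 * (k : ℝ) * π) := by
  constructor
  · rintro ⟨u, hu, hinner⟩
    choose φ hφ using fun i => Angle.exists_unitVec_eq (hu i)
    obtain rfl : u = fun i => Angle.unitVec (φ i) := funext fun i => (hφ i).symm
    choose ε hε hstep using fun i =>
      (Angle.cos_eq_cos_coe_iff _ (θ i)).mp ((Angle.inner_unitVec _ _).symm.trans (hinner i))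
    have hcycle := (exists_forall_add_one_sub_eq_iff_sum_eq_zero _).mp ⟨φ, hstep⟩
    obtain ⟨k, hk⟩ := (Angle.sum_coe_eq_zero_iff _ _).mp hcycle
    exact ⟨ε, k, hε, hk⟩
  · rintro ⟨ε, k, hε, hk⟩
    obtain ⟨φ, hstep⟩ := (exists_forall_add_one_sub_eq_iff_sum_eq_zero
      fun i => ((ε i * θ i : ℝ) : Angle)).mpr ((Angle.sum_coe_eq_zero_iff _ _).mpr ⟨k, hk⟩)
    refine ⟨fun i => Angle.unitVec (φ i), fun i => Angle.norm_unitVec _, fun i => ?_⟩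
    rw [Angle.inner_unitVec, hstep, Angle.cos_eq_cos_coe_iff]
    exact ⟨ε i, hε i, rfl⟩

/-- Realizability of prescribed angles on the edges of the `n`-cycle by unit vectors in the
plane: `a = (cos θ₁, …, cos θ_n)` has a Gram representation by unit vectors `u₁, …, u_n ∈ ℝ²`
with `uᵢᵀu_{i+1} = cos θᵢ` (indices mod `n`) iff `Σᵢ εᵢθᵢ ∈ 2πℤ` for some signs `ε ∈ {±1}ⁿ`. -/
theorem cycle_gram_representation_iff (n : ℕ) [NeZero n]
    (θ : Fin n → ℝ) (hθ : ∀ i, θ i ∈ Set.Icc 0 π) :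
    (∃ u : Fin n → EuclideanSpace ℝ (Fin 2),
      (∀ i, ‖u i‖ = 1) ∧
      ∀ i : Fin n, (inner ℝ (u i) (u (i + 1)) : ℝ) = Real.cos (θ i)) ↔
    (∃ (ε : Fin n → ℝ) (k : ℤ), (∀ i, ε i = 1 ∨ ε i = -1) ∧
      ∑ i, ε i * θ i = 2 * (k : ℝ) * π) :=
  cycle_gram_representation_iff_general n θ
end

section
/- Let (H = (V, F), p) be a framework (vectors p_i assigned to nodes) and T ⊆ V such that S = V \ T is a stable (independent) set in H, each node of S has degree at most k−1 in H, and the span of {p_i : i ∈ T} has dimension at most k. Then there exists a configuration q of H in R^k equivalent to p, i.e., q_iᵀq_j = p_iᵀp_j for all i ∈ V and all edges ij ∈ F. -/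
/-!
Map `span {p_i : i ∈ T}` isometrically into `ℝ^k` and put `q_i` there for `i ∈ T`. A node `v ∈ S`
only sees its neighbours, all in `T`, whose span `U` has dimension `≤ deg v < k`. Writing
`p_v = w + w'` with `w ∈ U`, `w' ⊥ U`, take `q_v = (image of w) + ‖w'‖ n` for a unit vector `n`
orthogonal to the image of `U`: this keeps `‖p_v‖` and every inner product with `U`. Since `S` is
stable these choices never interact.
-/

open Module Submodule

lemma exists_linearIsometry_of_finrank_le_s15 {E : Type*} [NormedAddCommGroup E]
    [InnerProductSpace ℝ E] [FiniteDimensional ℝ E] {k : ℕ} (h : finrank ℝ E ≤ k) :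
    Nonempty (E →ₗᵢ[ℝ] EuclideanSpace ℝ (Fin k)) := by
  let b := stdOrthonormalBasis ℝ E
  let g : Fin (finrank ℝ E) → EuclideanSpace ℝ (Fin k) :=
    fun i => EuclideanSpace.single (Fin.castLE h i) 1
  have hg : Orthonormal ℝ g :=
    (EuclideanSpace.orthonormal_single (𝕜 := ℝ) (ι := Fin k)).comp _ (Fin.castLE_injective h)
  let f : E →ₗ[ℝ] EuclideanSpace ℝ (Fin k) := b.toBasis.constr ℝ g
  have hfb : f ∘ b.toBasis = g := funext fun i => by simp [f]
  exact ⟨f.isometryOfOrthonormal b.orthonormal (hfb ▸ hg)⟩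

lemma Submodule.exists_norm_eq_one_mem_orthogonal {F : Type*} [NormedAddCommGroup F]
    [InnerProductSpace ℝ F] [FiniteDimensional ℝ F] (K : Submodule ℝ F)
    (hK : finrank ℝ K < finrank ℝ F) : ∃ n ∈ Kᗮ, ‖n‖ = 1 := by
  have hpos : 0 < finrank ℝ Kᗮ := by
    have := K.finrank_add_finrank_orthogonal
    omega
  have : Nontrivial Kᗮ := Module.finrank_pos_iff.mp hpos
  obtain ⟨n, hn⟩ := exists_norm_eq Kᗮ zero_le_one
  exact ⟨n, n.2, hn⟩

theorem LinearIsometry.exists_norm_eq_and_inner_map_eq {E F : Type*} [NormedAddCommGroup E]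
    [InnerProductSpace ℝ E] [NormedAddCommGroup F] [InnerProductSpace ℝ F]
    [FiniteDimensional ℝ F] {U : Submodule ℝ E} [FiniteDimensional ℝ U] (L : U →ₗᵢ[ℝ] F)
    (hU : finrank ℝ U < finrank ℝ F) (x : E) :
    ∃ y : F, ‖y‖ = ‖x‖ ∧ ∀ u : U, inner ℝ (L u) y = inner ℝ (u : E) x := by
  have hrange : finrank ℝ (LinearMap.range L.toLinearMap) < finrank ℝ F := by
    rwa [LinearMap.finrank_range_of_inj L.injective]
  obtain ⟨n, hn, hn1⟩ := (LinearMap.range L.toLinearMap).exists_norm_eq_one_mem_orthogonal hrange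
  have hLn : ∀ u : U, inner ℝ (L u) n = 0 := fun u =>
    (mem_orthogonal _ _).mp hn _ (LinearMap.mem_range_self L.toLinearMap u)
  refine ⟨L (U.orthogonalProjectionOnto x) + ‖Uᗮ.orthogonalProjectionOnto x‖ • n, ?_, ?_⟩
  · have hsq := U.norm_sq_eq_add_norm_sq_projection x
    rw [← sq_eq_sq₀ (norm_nonneg _) (norm_nonneg _), hsq, sq, sq, sq,
      norm_add_sq_eq_norm_sq_add_norm_sq_real (by rw [real_inner_smul_right, hLn, mul_zero]),
      L.norm_map, norm_smul, hn1, norm_norm, mul_one]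
  · intro u
    rw [inner_add_right, real_inner_smul_right, hLn, mul_zero, add_zero, L.inner_map_map,
      inner_orthogonalProjectionOnto_eq_of_mem_left]

lemma SimpleGraph.finrank_span_image_neighborSet_le_degree {V M : Type*} [AddCommGroup M]
    [Module ℝ M] (H : SimpleGraph V) (v : V) [Fintype (H.neighborSet v)] (p : V → M) :
    finrank ℝ (span ℝ (p '' H.neighborSet v)) ≤ H.degree v := by
  rw [Set.image_eq_range, ← H.card_neighborSet_eq_degree]
  exact finrank_range_le_card _

theorem folding_stable_set_general {V : Type*} [Fintype V]
    (H : SimpleGraph V) [DecidableRel H.Adj] (m k : ℕ)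
    (p : V → EuclideanSpace ℝ (Fin m)) (T : Set V)
    (hstable : ∀ u ∈ Tᶜ, ∀ v ∈ Tᶜ, ¬H.Adj u v)
    (hdeg : ∀ v ∈ Tᶜ, H.degree v + 1 ≤ k)
    (hspan : Module.finrank ℝ ↥(Submodule.span ℝ (p '' T)) ≤ k) :
    ∃ q : V → EuclideanSpace ℝ (Fin k),
      (∀ i, ‖q i‖ = ‖p i‖) ∧
      ∀ i j, H.Adj i j → (inner ℝ (q i) (q j) : ℝ) = inner ℝ (p i) (p j) := by
  classical
  set W := span ℝ (p '' T)
  obtain ⟨f⟩ := exists_linearIsometry_of_finrank_le_s15 hspan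
  have hpW {v} (hv : v ∈ T) : p v ∈ W := subset_span ⟨v, hv, rfl⟩
  have hUW (v : ↥Tᶜ) : span ℝ (p '' H.neighborSet v) ≤ W :=
    span_mono <| Set.image_mono fun u huv => by_contra fun hu => hstable v v.2 u hu huv
  have hfold (v : ↥Tᶜ) : ∃ y, ‖y‖ = ‖p v‖ ∧
      ∀ u (hu : u ∈ T), H.Adj v u → inner ℝ (f ⟨p u, hpW hu⟩) y = inner ℝ (p u) (p v) := by
    have hdim := (H.finrank_span_image_neighborSet_le_degree v p).trans_lt
      (by simpa using hdeg v v.2)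
    obtain ⟨y, hy, hinner⟩ := LinearIsometry.exists_norm_eq_and_inner_map_eq
      (f.comp ((inclusion (hUW v)).isometryOfInner fun _ _ => rfl))
      (hdim.trans_eq finrank_euclideanSpace_fin.symm) (p v)
    exact ⟨y, hy, fun u _ huv => hinner ⟨p u, subset_span ⟨u, huv, rfl⟩⟩⟩
  choose y hy_norm hy_inner using hfold
  refine ⟨fun v => if hv : v ∈ T then f ⟨p v, hpW hv⟩ else y ⟨v, hv⟩, fun v => ?_, fun i j hij => ?_⟩
  · by_cases hv : v ∈ T
    · simp [hv]
    · simp [hv, hy_norm]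
  · by_cases hi : i ∈ T <;> by_cases hj : j ∈ T
    · simp [hi, hj]
    · simp only [dif_pos hi, dif_neg hj]
      exact hy_inner ⟨j, hj⟩ i hi hij.symm
    · simp only [dif_neg hi, dif_pos hj]
      rw [real_inner_comm, hy_inner ⟨i, hi⟩ j hj hij, real_inner_comm]
    · exact absurd hij (hstable i hi j hj)

/-- Folding the vectors labeling a stable set: if `S = V \ T` is stable in `H`, each node of `S`
has degree at most `k − 1` in `H` (i.e. its closed neighborhood has at most `k` elements), and
`span {p_i : i ∈ T}` has dimension at most `k`, then there is an equivalent configuration of `H`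
in `ℝ^k` (same norms on all nodes and same inner products on all edges). -/
theorem folding_stable_set {V : Type*} [Fintype V] [DecidableEq V]
    (H : SimpleGraph V) [DecidableRel H.Adj] (m k : ℕ)
    (p : V → EuclideanSpace ℝ (Fin m)) (T : Set V)
    (hstable : ∀ u ∈ Tᶜ, ∀ v ∈ Tᶜ, ¬H.Adj u v)
    (hdeg : ∀ v ∈ Tᶜ, H.degree v + 1 ≤ k)
    (hspan : Module.finrank ℝ ↥(Submodule.span ℝ (p '' T)) ≤ k) :
    ∃ q : V → EuclideanSpace ℝ (Fin k),
      (∀ i, ‖q i‖ = ‖p i‖) ∧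
      ∀ i j, H.Adj i j → (inner ℝ (q i) (q j) : ℝ) = inner ℝ (p i) (p j) :=
  folding_stable_set_general H m k p T hstable hdeg hspan
end

section
/- Let (H = (V,F), p, Ω) be a psd stressed framework and let i ∈ V be a 2-node of the stressed graph with stressed neighbors i₁, i₂. Then p_i ∈ span{p_{i₁}, p_{i₂}}, so dim span(p) = dim span(p restricted to V \ {i}). Moreover, if the support graph of Ω is not the complete graph on {i, i₁, i₂}, then the Schur complement Ω_{−i} of Ω with respect to its (i,i)-entry is a nonzero psd stress matrix for the framework (H/i, p_{−i}), where H/i is obtained by contracting node i (replacing edges (i,i₁),(i,i₂) by edge (i₁,i₂)). -/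
/-!
A psd matrix with `Ω i j ≠ 0` has `Ω i i > 0`, so the equilibrium condition at the 2-node `i`
solves for `p i` as a combination of `p i₁` and `p i₂`. The Schur complement equals `Rᵀ Ω R`,
where `R` extends a vector on `V \ {i}` to `V` by the value at `i` that minimises the quadratic
form of `Ω`; hence it is psd. Its rows are rows of `Ω` minus multiples of row `i`, so it is again
in equilibrium, and its support lies in that of `Ω` together with the new edge `i₁ i₂`. If it
vanished, then `Ω j k = Ω j i * Ω i k / Ω i i` away from `i`, which would make the support of `Ω`
the complete graph on `{i, i₁, i₂}`.
-/

/-- `Ω` is a stress matrix for the framework `(H, p)`: a nonzero symmetric matrix supported on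
the vertices and edges of `H` satisfying the equilibrium condition at every node. -/
def IsStressMatrix {V : Type*} [Fintype V] {m : ℕ} (H : SimpleGraph V)
    (p : V → EuclideanSpace ℝ (Fin m)) (Ω : Matrix V V ℝ) : Prop :=
  Ω.IsSymm ∧ Ω ≠ 0 ∧ (∀ i j, i ≠ j → ¬H.Adj i j → Ω i j = 0) ∧
    ∀ i, ∑ j, Ω i j • p j = 0

/-- The graph `H/i` obtained by contracting the degree-two node `i` with neighbors `i₁, i₂`:
delete `i` and replace the edges `(i,i₁), (i,i₂)` by the edge `(i₁,i₂)`. -/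
def contractNode {V : Type*} (H : SimpleGraph V) (i i₁ i₂ : V) :
    SimpleGraph {x : V // x ≠ i} :=
  SimpleGraph.fromRel fun a b => H.Adj a b ∨ ((a : V) = i₁ ∧ (b : V) = i₂)

open Matrix Submodule

section Field

variable {V K : Type*} [Field K]

def schurComplementAt (Ω : Matrix V V K) (i : V) : Matrix {x // x ≠ i} {x // x ≠ i} K :=
  Matrix.of fun j k => Ω j k - Ω j i * Ω i k / Ω i i

variable {Ω : Matrix V V K} {i : V}

lemma schurComplementAt_isSymm (hΩ : Ω.IsSymm) : (schurComplementAt Ω i).IsSymm :=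
  IsSymm.ext fun j k => by
    rw [schurComplementAt, of_apply, of_apply, hΩ.apply (j : V), hΩ.apply (k : V) i,
      hΩ.apply i (j : V), mul_comm]

lemma apply_ne_zero_iff_of_schurComplementAt_eq_zero (hΩ : Ω.IsSymm) (hw : Ω i i ≠ 0)
    (hS : schurComplementAt Ω i = 0) (j k : V) : Ω j k ≠ 0 ↔ Ω i j ≠ 0 ∧ Ω i k ≠ 0 := by
  have hfactor : ∀ (j k : V) (hj : j ≠ i) (hk : k ≠ i), Ω j k = Ω i j * Ω i k / Ω i i := by
    intro j k hj hk
    have := congr_fun₂ hS ⟨j, hj⟩ ⟨k, hk⟩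
    rwa [schurComplementAt, of_apply, Matrix.zero_apply, sub_eq_zero, ← hΩ.apply j i] at this
  by_cases hj : j = i
  · subst hj; simp [hw]
  by_cases hk : k = i
  · subst hk; rw [← hΩ.apply]; simp [hw]
  simp [hfactor j k hj hk, hw]

variable {M : Type*} [AddCommGroup M] [Module K M]

lemma span_range_eq_span_image_ne {p : V → M} (h : p i ∈ span K (p '' {x | x ≠ i})) :
    span K (Set.range p) = span K (p '' {x | x ≠ i}) := by
  refine le_antisymm (span_le.2 ?_) (span_mono (Set.image_subset_range _ _))
  rintro _ ⟨j, rfl⟩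
  by_cases hj : j = i
  · exact hj ▸ h
  · exact subset_span ⟨j, hj, rfl⟩

variable [Fintype V] [DecidableEq V]

lemma sum_schurComplementAt_smul_eq_zero {p : V → M} (hw : Ω i i ≠ 0)
    (heq : ∀ j, ∑ k, Ω j k • p k = 0) (j : {x // x ≠ i}) :
    ∑ k, schurComplementAt Ω i j k • p k = 0 := by
  have hrest : ∀ j, ∑ k : {x // x ≠ i}, Ω j k • p k = -(Ω j i • p i) := fun j =>
    eq_neg_of_add_eq_zero_right <| (Fintype.sum_eq_add_sum_subtype_ne _ i).symm.trans (heq j)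
  calc ∑ k, schurComplementAt Ω i j k • p k
      = ∑ k : {x // x ≠ i}, Ω j k • p k - (Ω j i / Ω i i) • ∑ k : {x // x ≠ i}, Ω i k • p k := by
        simp only [schurComplementAt, of_apply, sub_smul, Finset.sum_sub_distrib, Finset.smul_sum,
          smul_smul, mul_div_right_comm]
    _ = 0 := by rw [hrest, hrest, smul_neg, smul_smul, div_mul_cancel₀ _ hw, sub_neg_eq_add,
        neg_add_cancel]

lemma mem_span_image_of_sum_smul_eq_zero {c : V → K} {p : V → M} (h : ∑ j, c j • p j = 0)
    (hi : c i ≠ 0) : p i ∈ span K (p '' {j | j ≠ i ∧ c j ≠ 0}) := by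
  have hpi : p i = -(c i)⁻¹ • ∑ j : {x // x ≠ i}, c j • p j := by
    rw [Fintype.sum_eq_add_sum_subtype_ne _ i, add_eq_zero_iff_eq_neg] at h
    rw [neg_smul, ← smul_neg, ← h, inv_smul_smul₀ hi]
  rw [hpi]
  refine smul_mem _ _ (sum_mem fun j _ => ?_)
  by_cases hj : c j = 0
  · simp [hj]
  · exact smul_mem _ _ (subset_span ⟨j, ⟨j.2, hj⟩, rfl⟩)

end Field

section Real

variable {V : Type*} {Ω : Matrix V V ℝ}

lemma Matrix.PosSemidef.diag_pos_of_apply_ne_zero (hΩ : Ω.PosSemidef) {i j : V}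
    (h : Ω i j ≠ 0) : 0 < Ω i i := by
  have hdet := (hΩ.submatrix ![i, j]).det_nonneg
  have hsymm : Ω j i = Ω i j := by simpa using hΩ.isHermitian.apply i j
  rw [det_fin_two] at hdet
  simp only [submatrix_apply, Matrix.cons_val_zero, Matrix.cons_val_one, hsymm] at hdet
  refine hΩ.diag_nonneg.lt_of_ne fun hw => h ?_
  rw [← hw] at hdet
  nlinarith [sq_nonneg (Ω i j)]

lemma schurComplementAt_posSemidef [Fintype V] [DecidableEq V] (hΩ : Ω.PosSemidef) (i : V) :
    (schurComplementAt Ω i).PosSemidef := by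
  let R : Matrix V {x // x ≠ i} ℝ :=
    of fun a k => (if a = k then 1 else 0) - if a = i then Ω i k / Ω i i else 0
  have hΩR : ∀ a k, (Ω * R) a k = Ω a k - Ω a i * Ω i k / Ω i i := fun a k => by
    simp [R, mul_apply, mul_sub, Finset.sum_sub_distrib, mul_div_assoc]
  suffices schurComplementAt Ω i = Rᴴ * Ω * R by
    rw [this]; exact hΩ.conjTranspose_mul_mul_same R
  ext j k
  rw [Matrix.mul_assoc, mul_apply]
  simp only [R, hΩR, conjTranspose_apply, of_apply, star_trivial, sub_mul, ite_mul, one_mul,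
    zero_mul, Finset.sum_sub_distrib, schurComplementAt]
  -- for `Ω i i = 0` both sides reduce to `Ω j k`, as `x / 0 = 0`
  rcases eq_or_ne (Ω i i) 0 with hw | hw <;> simp [hw]

end Real

lemma isStressMatrix_schurComplementAt {V : Type*} [Fintype V] [DecidableEq V] {m : ℕ}
    {H : SimpleGraph V} {p : V → EuclideanSpace ℝ (Fin m)} {Ω : Matrix V V ℝ} {i : V}
    (hstress : IsStressMatrix H p Ω) (hw : Ω i i ≠ 0) (hS : schurComplementAt Ω i ≠ 0)
    {G : SimpleGraph {x // x ≠ i}} (hH : ∀ a b : {x // x ≠ i}, H.Adj a b → G.Adj a b)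
    (hN : ∀ a b : {x // x ≠ i}, a ≠ b → Ω i a ≠ 0 → Ω i b ≠ 0 → G.Adj a b) :
    IsStressMatrix G (fun x => p x) (schurComplementAt Ω i) := by
  obtain ⟨hsym, -, hsupp, heq⟩ := hstress
  refine ⟨schurComplementAt_isSymm hsym, hS, fun a b hab hG => ?_,
    sum_schurComplementAt_smul_eq_zero hw heq⟩
  have hab' : (a : V) ≠ b := Subtype.coe_injective.ne hab
  have hΩab : Ω a b = 0 := hsupp a b hab' fun h => hG (hH a b h)
  have hprod : Ω a i * Ω i b = 0 := by
    rw [hsym.apply]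
    by_contra h
    obtain ⟨ha, hb⟩ := mul_ne_zero_iff.1 h
    exact hG (hN a b hab ha hb)
  simp [schurComplementAt, hΩab, hprod]

section ContractNode

variable {V : Type*} {H : SimpleGraph V} {i i₁ i₂ : V} {a b : {x // x ≠ i}}

lemma contractNode_adj_of_adj (h : H.Adj a b) : (contractNode H i i₁ i₂).Adj a b :=
  (SimpleGraph.fromRel_adj _ _ _).2 ⟨fun hab => h.ne (congrArg Subtype.val hab), .inl (.inl h)⟩

lemma contractNode_adj_of_mem_pair (ha : (a : V) = i₁ ∨ (a : V) = i₂)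
    (hb : (b : V) = i₁ ∨ (b : V) = i₂) (hab : a ≠ b) : (contractNode H i i₁ i₂).Adj a b := by
  refine (SimpleGraph.fromRel_adj _ _ _).2 ⟨hab, ?_⟩
  rcases ha with ha | ha <;> rcases hb with hb | hb
  · exact absurd (Subtype.ext (ha.trans hb.symm)) hab
  · exact .inl (.inr ⟨ha, hb⟩)
  · exact .inr (.inr ⟨hb, ha⟩)
  · exact absurd (Subtype.ext (ha.trans hb.symm)) hab

end ContractNode

theorem contract_two_node_general {V : Type*} [Fintype V] [DecidableEq V]
    (H : SimpleGraph V) (m : ℕ)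
    (p : V → EuclideanSpace ℝ (Fin m)) (Ω : Matrix V V ℝ)
    (hΩ : Ω.PosSemidef) (hstress : IsStressMatrix H p Ω)
    (i i₁ i₂ : V)
    (hw1 : Ω i i₁ ≠ 0) (hw2 : Ω i i₂ ≠ 0)
    (h2node : ∀ j, j ≠ i → j ≠ i₁ → j ≠ i₂ → Ω i j = 0) :
    p i ∈ Submodule.span ℝ ({p i₁, p i₂} : Set (EuclideanSpace ℝ (Fin m))) ∧
    Module.finrank ℝ ↥(Submodule.span ℝ (Set.range p)) =
      Module.finrank ℝ ↥(Submodule.span ℝ (p '' {x | x ≠ i})) ∧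
    ((¬ ∀ j k, j ≠ k →
        (Ω j k ≠ 0 ↔ j ∈ ({i, i₁, i₂} : Set V) ∧ k ∈ ({i, i₁, i₂} : Set V))) →
      (Matrix.PosSemidef
          (Matrix.of fun j k : {x : V // x ≠ i} =>
            Ω j k - Ω (j : V) i * Ω i k / Ω i i) ∧
        IsStressMatrix (contractNode H i i₁ i₂) (fun x : {x : V // x ≠ i} => p x)
          (Matrix.of fun j k : {x : V // x ≠ i} =>
            Ω j k - Ω (j : V) i * Ω i k / Ω i i))) := by
  have hw : Ω i i ≠ 0 := (hΩ.diag_pos_of_apply_ne_zero hw1).ne'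
  have hnbr : ∀ j, Ω i j ≠ 0 ↔ j ∈ ({i, i₁, i₂} : Set V) := fun j => by
    refine ⟨fun hj => ?_, ?_⟩
    · by_contra! hj'
      simp only [Set.mem_insert_iff, Set.mem_singleton_iff, not_or] at hj'
      exact hj (h2node j hj'.1 hj'.2.1 hj'.2.2)
    · rintro (rfl | rfl | rfl) <;> assumption
  have hequil : ∑ j, Ω i j • p j = 0 := hstress.2.2.2 i
  have hpi := mem_span_image_of_sum_smul_eq_zero hequil hw
  refine ⟨span_mono ?_ hpi, ?_, fun hne => ⟨schurComplementAt_posSemidef hΩ i,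
    isStressMatrix_schurComplementAt hstress hw (fun hS => hne fun j k _ => ?_)
      (fun a b => contractNode_adj_of_adj) fun a b hab ha hb => ?_⟩⟩
  · rintro _ ⟨j, ⟨hji, hj⟩, rfl⟩
    rcases (hnbr j).1 hj with h | h | h
    exacts [absurd h hji, .inl (congrArg p h), .inr (congrArg p h)]
  · rw [span_range_eq_span_image_ne (span_mono (Set.image_mono fun j hj => hj.1) hpi)]
  · rw [apply_ne_zero_iff_of_schurComplementAt_eq_zero hstress.1 hw hS, hnbr, hnbr]
  · exact contractNode_adj_of_mem_pair (((hnbr a).1 ha).resolve_left a.2)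
      (((hnbr b).1 hb).resolve_left b.2) hab

/-- Contracting a 2-node: if `i` is a 2-node of a psd stressed framework with stressed neighbors
`i₁, i₂`, then `p_i ∈ span{p_{i₁}, p_{i₂}}` (so the span of the configuration is unchanged upon
removing `i`); moreover, if the support graph of `Ω` is not the complete graph on `{i, i₁, i₂}`,
the Schur complement of `Ω` at the `(i,i)`-entry is a nonzero psd stress matrix of the
contracted framework `(H/i, p₋ᵢ)`. -/
theorem contract_two_node {V : Type*} [Fintype V] [DecidableEq V]
    (H : SimpleGraph V) (m : ℕ)
    (p : V → EuclideanSpace ℝ (Fin m)) (Ω : Matrix V V ℝ)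
    (hΩ : Ω.PosSemidef) (hstress : IsStressMatrix H p Ω)
    (i i₁ i₂ : V) (h1 : i₁ ≠ i) (h2 : i₂ ≠ i) (h12 : i₁ ≠ i₂)
    (ha1 : H.Adj i i₁) (ha2 : H.Adj i i₂)
    (hw1 : Ω i i₁ ≠ 0) (hw2 : Ω i i₂ ≠ 0)
    (h2node : ∀ j, j ≠ i → j ≠ i₁ → j ≠ i₂ → Ω i j = 0) :
    p i ∈ Submodule.span ℝ ({p i₁, p i₂} : Set (EuclideanSpace ℝ (Fin m))) ∧
    Module.finrank ℝ ↥(Submodule.span ℝ (Set.range p)) =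
      Module.finrank ℝ ↥(Submodule.span ℝ (p '' {x | x ≠ i})) ∧
    ((¬ ∀ j k, j ≠ k →
        (Ω j k ≠ 0 ↔ j ∈ ({i, i₁, i₂} : Set V) ∧ k ∈ ({i, i₁, i₂} : Set V))) →
      (Matrix.PosSemidef
          (Matrix.of fun j k : {x : V // x ≠ i} =>
            Ω j k - Ω (j : V) i * Ω i k / Ω i i) ∧
        IsStressMatrix (contractNode H i i₁ i₂) (fun x : {x : V // x ≠ i} => p x)
          (Matrix.of fun j k : {x : V // x ≠ i} =>
            Ω j k - Ω (j : V) i * Ω i k / Ω i i))) :=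
  contract_two_node_general H m p Ω hΩ hstress i i₁ i₂ hw1 hw2 h2node
end

section
/- Let G = ([n], E) be a graph, e₀ = (i₀, j₀) a non-edge, and a ∈ S_{++}(G) a G-partial matrix admitting a positive definite completion. Then there exist a Gram realization p = (p₁,...,p_n) of (G, a) in some R^k and a psd matrix Ω = (w_{ij}) ∈ S^n_+ such that: w_{i₀j₀} ≠ 0; w_{ij} = 0 for all pairs ij ∉ V ∪ E ∪ {e₀}; the equilibrium condition w_{ii}p_i + Σ_{j: ij ∈ E∪{e₀}} w_{ij}p_j = 0 holds at every node i; and dim span{p_i, p_j} = 2 for every edge ij ∈ E. -/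
/-!
Among the psd completions of `A`, a compact set, pick `X` maximizing the entry `(i₀, j₀)`; the
realization is a Gram representation of `X`. By maximality, the open convex cone of matrices with
positive quadratic form misses the affine slice of symmetric completions with the optimal
`(i₀, j₀)` entry, and a separating hyperplane `Y ↦ tr(ΩY)` is the psd stress: it is orthogonal to
every direction of the slice (the support condition), complementary slackness `tr(ΩX) = 0` is the
equilibrium condition, and `Ω i₀ j₀ ≠ 0` because `tr(ΩB) > 0` for the positive definite
completion `B`. On an edge, the Gram matrix of `(p i, p j)` is a principal submatrix of `B`.
-/

open Matrix Filter Topology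

namespace Matrix

variable {n : Type*}

lemma isSymm_single_add_single [DecidableEq n] (i j : n) :
    (single i j (1 : ℝ) + single j i 1).IsSymm := by
  simpa using isSymm_add_transpose_self (single i j (1 : ℝ))

variable [Fintype n]

lemma PosSemidef.abs_apply_le {X : Matrix n n ℝ} (hX : X.PosSemidef) (i j : n) :
    |X i j| ≤ (X i i + X j j) / 2 := by
  classical
  have hq (c : ℝ) : 0 ≤ X i i + c * (X i j + X j i) + c ^ 2 * X j j := by
    have := hX.dotProduct_mulVec_nonneg (Pi.single i 1 + c • Pi.single j 1)
    simp only [star_trivial, add_dotProduct, dotProduct_add, mulVec_add, mulVec_smul,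
      smul_dotProduct, dotProduct_smul, mulVec_single, single_dotProduct, smul_eq_mul] at this
    simp only [MulOpposite.op_one, one_smul, col_apply, one_mul] at this
    linarith
  have hsymm : X j i = X i j := hX.isHermitian.apply i j
  rw [abs_le]
  constructor <;> nlinarith [hq 1, hq (-1)]

lemma isClosed_setOf_posSemidef : IsClosed {X : Matrix n n ℝ | X.PosSemidef} := by
  simp only [posSemidef_iff_dotProduct_mulVec, Set.ofPred_and, Set.ofPred_forall]
  refine .inter (isClosed_eq (by fun_prop) (by fun_prop)) (isClosed_iInter fun x => ?_)
  exact isClosed_le continuous_const (by simp only [dotProduct, mulVec]; fun_prop)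

/-- No symmetry is imposed, so that this set is open in the space of all matrices. -/
def posQuadForm (n : Type*) [Fintype n] : Set (Matrix n n ℝ) :=
  {X | ∀ v : n → ℝ, v ≠ 0 → 0 < v ⬝ᵥ X *ᵥ v}

lemma isOpen_posQuadForm : IsOpen (posQuadForm n) := by
  have hsphere : posQuadForm n = {X | ∀ v ∈ Metric.sphere (0 : n → ℝ) 1, 0 < v ⬝ᵥ X *ᵥ v} := by
    ext X
    refine ⟨fun h v hv => h v (Metric.ne_of_mem_sphere hv one_ne_zero), fun h v hv => ?_⟩
    have := h (‖v‖⁻¹ • v) (by simp [norm_smul, hv])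
    simp only [mulVec_smul, smul_dotProduct, dotProduct_smul, smul_eq_mul] at this
    exact pos_of_mul_pos_right (pos_of_mul_pos_right this (by positivity)) (by positivity)
  rw [hsphere, isOpen_iff_eventually]
  intro X hX
  refine (isCompact_sphere (0 : n → ℝ) 1).eventually_forall_of_forall_eventually fun v hv => ?_
  have hcont : Continuous fun z : Matrix n n ℝ × (n → ℝ) => z.2 ⬝ᵥ z.1 *ᵥ z.2 := by
    simp only [dotProduct, mulVec]
    fun_prop
  exact continuousAt_const.eventually_lt hcont.continuousAt (hX v hv)

lemma convex_posQuadForm : Convex ℝ (posQuadForm n) := by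
  simp only [posQuadForm, Set.ofPred_forall]
  refine convex_iInter fun v => convex_iInter fun _ => convex_halfSpace_gt ?_ 0
  constructor <;> intros <;> simp [add_mulVec, smul_mulVec]

lemma PosDef.mem_posQuadForm {X : Matrix n n ℝ} (hX : X.PosDef) : X ∈ posQuadForm n :=
  fun v hv => by simpa using hX.dotProduct_mulVec_pos hv

lemma posSemidef_of_mem_posQuadForm {X : Matrix n n ℝ} (hX : X ∈ posQuadForm n)
    (hXs : X.IsSymm) : X.PosSemidef := by
  refine .of_dotProduct_mulVec_nonneg (isHermitian_iff_isSymm.mpr hXs) fun v => ?_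
  rcases eq_or_ne v 0 with rfl | hv
  · simp
  · simpa using (hX v hv).le

lemma PosSemidef.mem_closure_posQuadForm [DecidableEq n] {X : Matrix n n ℝ}
    (hX : X.PosSemidef) : X ∈ closure (posQuadForm n) := by
  refine mem_closure_of_tendsto (f := fun ε : ℝ => X + ε • 1) (b := 𝓝[>] 0) ?_ ?_
  · have : Continuous fun ε : ℝ => X + ε • (1 : Matrix n n ℝ) := by fun_prop
    simpa using (this.tendsto 0).mono_left nhdsWithin_le_nhds
  · refine eventually_nhdsWithin_of_forall fun ε (hε : 0 < ε) v hv => ?_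
    have hXv := hX.dotProduct_mulVec_nonneg v
    have hvv := dotProduct_self_star_pos_iff.mpr hv
    simp only [star_trivial] at hXv hvv
    simp only [add_mulVec, smul_mulVec, one_mulVec, dotProduct_add, dotProduct_smul, smul_eq_mul]
    positivity

lemma exists_trace_mul_eq (f : Matrix n n ℝ →ₗ[ℝ] ℝ) :
    ∃ W : Matrix n n ℝ, ∀ X, f X = (W * X).trace := by
  classical
  refine ⟨of fun i j => f (single j i 1), fun X => ?_⟩
  conv_lhs => rw [matrix_eq_sum_single X]
  simp only [map_sum, trace, diag, mul_apply, of_apply]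
  rw [Finset.sum_comm]
  refine Finset.sum_congr rfl fun i _ => Finset.sum_congr rfl fun j _ => ?_
  rw [show single j i (X j i) = X j i • single j i (1 : ℝ) by simp [smul_single], map_smul,
    smul_eq_mul, mul_comm]

lemma exists_isSymm_trace_mul_eq (f : Matrix n n ℝ →ₗ[ℝ] ℝ) :
    ∃ Ω : Matrix n n ℝ, Ω.IsSymm ∧ ∀ X : Matrix n n ℝ, X.IsSymm → f X = (Ω * X).trace := by
  obtain ⟨W, hW⟩ := exists_trace_mul_eq f
  refine ⟨(1 / 2 : ℝ) • (W + Wᵀ), (isSymm_add_transpose_self W).smul _, fun X hX => ?_⟩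
  have hWt : (Wᵀ * X).trace = (W * X).trace := by
    rw [← trace_transpose, transpose_mul, hX.eq, transpose_transpose, trace_mul_comm]
  rw [smul_mul, add_mul, trace_smul, trace_add, hWt, hW, smul_eq_mul]
  ring

lemma posSemidef_of_trace_mul_nonneg {Ω : Matrix n n ℝ} (hΩ : Ω.IsSymm)
    (h : ∀ Y : Matrix n n ℝ, Y.PosSemidef → 0 ≤ (Ω * Y).trace) : Ω.PosSemidef := by
  refine .of_dotProduct_mulVec_nonneg (isHermitian_iff_isSymm.mpr hΩ) fun x => ?_
  simpa [mul_vecMulVec, trace_vecMulVec, dotProduct_comm] using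
    h _ (posSemidef_vecMulVec_self_star x)

/-- Strong duality under Slater's condition: `Ω` comes from a hyperplane separating `L` from the
open cone `posQuadForm n`, whose closure contains the psd cone. -/
lemma exists_posSemidef_dual {L : Set (Matrix n n ℝ)} (hL : Convex ℝ L)
    (hLsymm : ∀ Y ∈ L, Y.IsSymm) (hdisj : Disjoint (posQuadForm n) L)
    {X : Matrix n n ℝ} (hX : X.PosSemidef) (hXL : X ∈ L) :
    ∃ Ω : Matrix n n ℝ, Ω.IsSymm ∧ (∀ Y, Y.PosSemidef → 0 ≤ (Ω * Y).trace) ∧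
      (∀ B, B.PosDef → 0 < (Ω * B).trace) ∧ ∀ Y ∈ L, (Ω * Y).trace ≤ 0 := by
  classical
  obtain ⟨f, u, hfs, hfL⟩ :=
    geometric_hahn_banach_open convex_posQuadForm isOpen_posQuadForm hL hdisj
  have hle_u : ∀ Y : Matrix n n ℝ, Y.PosSemidef → f Y ≤ u := fun Y hY =>
    closure_minimal (fun Z hZ => (hfs Z hZ).le) (isClosed_le f.continuous continuous_const)
      hY.mem_closure_posQuadForm
  have hle_zero : ∀ Y : Matrix n n ℝ, Y.PosSemidef → f Y ≤ 0 := by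
    intro Y hY
    by_contra! hpos
    obtain ⟨c, hc⟩ := exists_nat_gt (u / f Y)
    have := hle_u _ (hY.smul (Nat.cast_nonneg c : (0 : ℝ) ≤ c))
    rw [map_smul, smul_eq_mul] at this
    rw [div_lt_iff₀ hpos] at hc
    linarith
  have hu : u ≤ 0 := (hfL X hXL).trans (hle_zero X hX)
  have hu' : 0 ≤ u := by simpa using hle_u 0 .zero
  obtain ⟨Ω, hΩ, hfΩ⟩ := exists_isSymm_trace_mul_eq (-f.toLinearMap)
  simp only [LinearMap.neg_apply, ContinuousLinearMap.coe_coe, neg_eq_iff_eq_neg] at hfΩ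
  refine ⟨Ω, hΩ, fun Y hY => ?_, fun B hB => ?_, fun Y hY => ?_⟩
  · rw [← neg_nonpos, ← hfΩ Y (isHermitian_iff_isSymm.mp hY.isHermitian)]
    exact hle_zero Y hY
  · rw [← neg_neg_iff_pos, ← hfΩ B (isHermitian_iff_isSymm.mp hB.isHermitian)]
    exact (hfs B hB.mem_posQuadForm).trans_le hu
  · rw [← neg_nonneg, ← hfΩ Y (hLsymm Y hY)]
    exact hu'.trans (hfL Y hY)

lemma PosSemidef.mulVec_eq_zero_of_trace_mul_eq_zero {Ω : Matrix n n ℝ} (hΩ : Ω.PosSemidef)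
    {m : ℕ} {v : Fin m → n → ℝ} (h : (Ω * ∑ l, vecMulVec (v l) (star (v l))).trace = 0)
    (l : Fin m) : Ω *ᵥ v l = 0 := by
  have hterm (l : Fin m) :
      (Ω * vecMulVec (v l) (star (v l))).trace = star (v l) ⬝ᵥ Ω *ᵥ v l := by
    rw [mul_vecMulVec, trace_vecMulVec, dotProduct_comm]
  simp only [Matrix.mul_sum, trace_sum, hterm] at h
  rw [Finset.sum_eq_zero_iff_of_nonneg fun l _ => hΩ.dotProduct_mulVec_nonneg (v l)] at h
  exact (hΩ.dotProduct_mulVec_zero_iff _).mp (h l (Finset.mem_univ l))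

lemma IsSymm.trace_mul_single_add_single [DecidableEq n] {Ω : Matrix n n ℝ} (hΩ : Ω.IsSymm)
    (i j : n) : (Ω * (single i j 1 + single j i 1)).trace = 2 * Ω i j := by
  simp [mul_add, trace_mul_single, hΩ.apply i j]
  ring

end Matrix

lemma inner_toLp_eq_sum_vecMulVec_apply {n : Type*} {m : ℕ} (v : Fin m → n → ℝ) (a b : n) :
    inner ℝ (WithLp.toLp 2 fun l => v l a : EuclideanSpace ℝ (Fin m))
        (WithLp.toLp 2 fun l => v l b) =
      (∑ l, vecMulVec (v l) (star (v l))) a b := by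
  simp [PiLp.inner_apply, Matrix.sum_apply, vecMulVec_apply, mul_comm]

lemma finrank_span_pair_eq_two_of_posDef {n E : Type*} [Fintype n] [NormedAddCommGroup E]
    [InnerProductSpace ℝ E] {x y : E} {B : Matrix n n ℝ} (hB : B.PosDef) {i j : n} (hij : i ≠ j)
    (hx : inner ℝ x x = B i i) (hxy : inner ℝ x y = B i j) (hy : inner ℝ y y = B j j) :
    Module.finrank ℝ (Submodule.span ℝ {x, y}) = 2 := by
  have hgram : gram ℝ ![x, y] = B.submatrix ![i, j] ![i, j] := by
    have hBji : B j i = B i j := (isHermitian_iff_isSymm.mp hB.isHermitian).apply i j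
    ext a b
    fin_cases a <;> fin_cases b <;>
      simp only [gram_apply, submatrix_apply, Fin.zero_eta, Fin.mk_one, cons_val_zero,
        cons_val_one]
    exacts [hx, hxy, real_inner_comm x y ▸ hxy.trans hBji.symm, hy]
  have hli : LinearIndependent ℝ ![x, y] := by
    rw [← posDef_gram_iff_linearIndependent, hgram]
    exact hB.submatrix
      (Fin.cons_injective_iff.mpr ⟨by simpa using hij, Function.injective_of_subsingleton _⟩)
  rw [← range_cons_cons_empty x y ![], finrank_span_eq_card hli, Fintype.card_fin]

section Completion

variable {n : Type*}

/-- `A` is read as a `G`-partial matrix: only its diagonal and its entries on edges matter. -/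
def IsCompletion (G : SimpleGraph n) (A X : Matrix n n ℝ) : Prop :=
  (∀ i, X i i = A i i) ∧ ∀ i j, G.Adj i j → X i j = A i j

lemma IsCompletion.add_smul_single [DecidableEq n] {G : SimpleGraph n} {A X : Matrix n n ℝ}
    (hX : IsCompletion G A X) {i j : n} (hij : i ≠ j) (hadj : ¬G.Adj i j) (c : ℝ) :
    IsCompletion G A (X + c • (single i j 1 + single j i 1)) := by
  refine ⟨fun k => ?_, fun a b hab => ?_⟩
  · have : ¬(i = k ∧ j = k) := fun h => hij (h.1.trans h.2.symm)
    have : ¬(j = k ∧ i = k) := fun h => hij (h.2.trans h.1.symm)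
    simp [hX.1 k, *]
  · have : ¬(i = a ∧ j = b) := by rintro ⟨rfl, rfl⟩; exact hadj hab
    have : ¬(j = a ∧ i = b) := by rintro ⟨rfl, rfl⟩; exact hadj hab.symm
    simp [hX.2 a b hab, *]

def completionSlice (G : SimpleGraph n) (A : Matrix n n ℝ) (i₀ j₀ : n) (t : ℝ) :
    Set (Matrix n n ℝ) :=
  {Y | Y.IsSymm ∧ IsCompletion G A Y ∧ Y i₀ j₀ = t}

lemma convex_completionSlice (G : SimpleGraph n) (A : Matrix n n ℝ) (i₀ j₀ : n) (t : ℝ) :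
    Convex ℝ (completionSlice G A i₀ j₀ t) := by
  rintro Y ⟨hYs, ⟨hYd, hYe⟩, hY₀⟩ Z ⟨hZs, ⟨hZd, hZe⟩, hZ₀⟩ a b - - hab
  refine ⟨(hYs.smul a).add (hZs.smul b), ⟨fun i => ?_, fun i j h => ?_⟩, ?_⟩ <;>
    simp [*, ← add_mul]

variable [Fintype n]

lemma isCompact_setOf_posSemidef_isCompletion (G : SimpleGraph n) (A : Matrix n n ℝ) :
    IsCompact {X : Matrix n n ℝ | X.PosSemidef ∧ IsCompletion G A X} := by
  refine (isCompact_univ_pi fun i => isCompact_univ_pi fun j =>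
    isCompact_Icc (a := -((A i i + A j j) / 2)) (b := (A i i + A j j) / 2)).of_isClosed_subset
      ?_ ?_
  · simp only [IsCompletion, Set.ofPred_and, Set.ofPred_forall]
    refine isClosed_setOf_posSemidef.inter (.inter ?_ ?_) <;> refine isClosed_iInter fun i => ?_
    · exact isClosed_eq (by fun_prop) continuous_const
    · exact isClosed_iInter fun j => isClosed_iInter fun _ =>
        isClosed_eq (by fun_prop) continuous_const
  · rintro X ⟨hX, hdiag, -⟩
    simp only [Set.mem_pi, Set.mem_univ, forall_true_left, Set.mem_Icc, ← abs_le]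
    intro i j
    simpa [hdiag] using hX.abs_apply_le i j

lemma trace_mul_eq_of_isCompletion {G : SimpleGraph n} {A B X Ω : Matrix n n ℝ}
    (hΩ : ∀ i j, i ≠ j → ¬G.Adj i j → Ω i j = 0) (hB : IsCompletion G A B)
    (hX : IsCompletion G A X) : (Ω * B).trace = (Ω * X).trace := by
  simp only [trace, diag, mul_apply]
  refine Finset.sum_congr rfl fun i _ => Finset.sum_congr rfl fun j _ => ?_
  by_cases hij : i = j
  · rw [hij, hB.1, hX.1]
  by_cases hadj : G.Adj j i
  · rw [hB.2 j i hadj, hX.2 j i hadj]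
  · rw [hΩ i j hij fun h => hadj h.symm, zero_mul, zero_mul]

variable [DecidableEq n]

lemma disjoint_posQuadForm_completionSlice {G : SimpleGraph n} {A X : Matrix n n ℝ} {i₀ j₀ : n}
    (hne : i₀ ≠ j₀) (hnadj : ¬G.Adj i₀ j₀)
    (hmax : IsMaxOn (fun Y : Matrix n n ℝ => Y i₀ j₀) {Y | Y.PosSemidef ∧ IsCompletion G A Y} X) :
    Disjoint (posQuadForm n) (completionSlice G A i₀ j₀ (X i₀ j₀)) := by
  rw [Set.disjoint_left]
  rintro Y hYs ⟨hYsymm, hYA, hY₀⟩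
  set E : Matrix n n ℝ := single i₀ j₀ 1 + single j₀ i₀ 1
  have hnear : ∀ᶠ c in 𝓝[>] (0 : ℝ), Y + c • E ∈ posQuadForm n :=
    (((by fun_prop : Continuous fun c : ℝ => Y + c • E).tendsto' 0 Y (by simp)).eventually
      (isOpen_posQuadForm.mem_nhds hYs)).filter_mono nhdsWithin_le_nhds
  obtain ⟨c, hcs, hc⟩ := (hnear.and self_mem_nhdsWithin).exists
  have hsymm : (Y + c • E).IsSymm := hYsymm.add ((isSymm_single_add_single i₀ j₀).smul c)
  have := hmax ⟨posSemidef_of_mem_posQuadForm hcs hsymm, hYA.add_smul_single hne hnadj c⟩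
  simp [E, hne, hY₀] at this
  linarith [show (0 : ℝ) < c from hc]

theorem exists_stress_of_isMaxOn {G : SimpleGraph n} {A B X : Matrix n n ℝ} {i₀ j₀ : n}
    (hne : i₀ ≠ j₀) (hnadj : ¬G.Adj i₀ j₀) (hB : B.PosDef) (hBA : IsCompletion G A B)
    (hX : X.PosSemidef) (hXA : IsCompletion G A X)
    (hmax : IsMaxOn (fun Y : Matrix n n ℝ => Y i₀ j₀) {Y | Y.PosSemidef ∧ IsCompletion G A Y} X) :
    ∃ Ω : Matrix n n ℝ, Ω.PosSemidef ∧ Ω i₀ j₀ ≠ 0 ∧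
      (∀ i j, i ≠ j → ¬G.Adj i j → ¬((i = i₀ ∧ j = j₀) ∨ (i = j₀ ∧ j = i₀)) → Ω i j = 0) ∧
      (Ω * X).trace = 0 := by
  have hXL : X ∈ completionSlice G A i₀ j₀ (X i₀ j₀) :=
    ⟨isHermitian_iff_isSymm.mp hX.isHermitian, hXA, rfl⟩
  obtain ⟨Ω, hΩ, hpsd, hpd, hL⟩ := exists_posSemidef_dual (convex_completionSlice ..)
    (fun Y hY => hY.1) (disjoint_posQuadForm_completionSlice hne hnadj hmax) hX hXL
  have hΩX : (Ω * X).trace = 0 := le_antisymm (hL X hXL) (hpsd X hX)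
  have hsupp : ∀ i j, i ≠ j → ¬G.Adj i j → ¬((i = i₀ ∧ j = j₀) ∨ (i = j₀ ∧ j = i₀)) →
      Ω i j = 0 := by
    intro i j hij hadj h₀
    have hmem (c : ℝ) :
        X + c • (single i j 1 + single j i 1) ∈ completionSlice G A i₀ j₀ (X i₀ j₀) := by
      refine ⟨hXL.1.add ((isSymm_single_add_single i j).smul c),
        hXA.add_smul_single hij hadj c, ?_⟩
      rw [Matrix.add_apply, Matrix.smul_apply, Matrix.add_apply, single_apply, single_apply,
        if_neg fun h => h₀ (.inl h), if_neg fun h => h₀ (.inr h.symm), add_zero, smul_zero,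
        add_zero]
    have hc (c : ℝ) : c * (2 * Ω i j) ≤ 0 := by
      have := hL _ (hmem c)
      rwa [mul_add, trace_add, hΩX, Matrix.mul_smul, trace_smul,
        hΩ.trace_mul_single_add_single, zero_add, smul_eq_mul] at this
    nlinarith [hc (Ω i j)]
  refine ⟨Ω, posSemidef_of_trace_mul_nonneg hΩ hpsd, fun h₀ => ?_, hsupp, hΩX⟩
  -- `Ω` would then live where `B` and `X` agree, so `0 < tr(ΩB) = tr(ΩX) = 0`.
  have hΩG : ∀ i j, i ≠ j → ¬G.Adj i j → Ω i j = 0 := by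
    intro i j hij hadj
    by_cases hp : (i = i₀ ∧ j = j₀) ∨ (i = j₀ ∧ j = i₀)
    · rcases hp with ⟨rfl, rfl⟩ | ⟨rfl, rfl⟩
      exacts [h₀, (hΩ.apply _ _).trans h₀]
    · exact hsupp i j hij hadj hp
  linarith [hpd B hB, trace_mul_eq_of_isCompletion hΩG hBA hXA]

end Completion

/-- Existence of a flat Gram realization with a psd stress matrix, obtained by stretching along
a non-edge `(i₀, j₀)`: given a `G`-partial matrix `A` admitting a positive definite completion,
there is a Gram realization `p` of `(G, A)` and a psd matrix `Ω` with `Ω_{i₀j₀} ≠ 0`, supported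
on `V ∪ E ∪ {(i₀,j₀)}`, satisfying the equilibrium condition at every node, and with
`dim span{p_i, p_j} = 2` for every edge `ij` of `G`. -/
theorem exists_psd_stressed_realization {V : Type*} [Fintype V] [DecidableEq V]
    (G : SimpleGraph V) (i₀ j₀ : V) (hne : i₀ ≠ j₀) (hnadj : ¬G.Adj i₀ j₀)
    (A : Matrix V V ℝ)
    (hA : ∃ B : Matrix V V ℝ, B.PosDef ∧ (∀ i, B i i = A i i) ∧
      ∀ i j, G.Adj i j → B i j = A i j) :
    ∃ (k : ℕ) (p : V → EuclideanSpace ℝ (Fin k)) (Ω : Matrix V V ℝ),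
      Ω.PosSemidef ∧
      (∀ i, (inner ℝ (p i) (p i) : ℝ) = A i i) ∧
      (∀ i j, G.Adj i j → (inner ℝ (p i) (p j) : ℝ) = A i j) ∧
      Ω i₀ j₀ ≠ 0 ∧
      (∀ i j, i ≠ j → ¬G.Adj i j →
        ¬((i = i₀ ∧ j = j₀) ∨ (i = j₀ ∧ j = i₀)) → Ω i j = 0) ∧
      (∀ i, ∑ j, Ω i j • p j = 0) ∧
      (∀ i j, G.Adj i j →
        Module.finrank ℝ
          ↥(Submodule.span ℝ ({p i, p j} : Set (EuclideanSpace ℝ (Fin k)))) = 2) := by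
  obtain ⟨B, hB, hBA⟩ := hA
  obtain ⟨X, ⟨hX, hXA⟩, hmax⟩ := (isCompact_setOf_posSemidef_isCompletion G A).exists_isMaxOn
    ⟨B, hB.posSemidef, hBA⟩ (continuous_apply_apply i₀ j₀).continuousOn
  obtain ⟨Ω, hΩ, hΩ₀, hsupp, hΩX⟩ := exists_stress_of_isMaxOn hne hnadj hB hBA hX hXA hmax
  obtain ⟨m, v, rfl⟩ := posSemidef_iff_eq_sum_vecMulVec.mp hX
  set p : V → EuclideanSpace ℝ (Fin m) := fun j => WithLp.toLp 2 fun l => v l j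
  have hdiag (i : V) : inner ℝ (p i) (p i) = A i i :=
    (inner_toLp_eq_sum_vecMulVec_apply v i i).trans (hXA.1 i)
  have hedge (i j : V) (h : G.Adj i j) : inner ℝ (p i) (p j) = A i j :=
    (inner_toLp_eq_sum_vecMulVec_apply v i j).trans (hXA.2 i j h)
  refine ⟨m, p, Ω, hΩ, hdiag, hedge, hΩ₀, hsupp, fun i => ?_, fun i j h => ?_⟩
  · ext l
    simpa [p, mulVec, dotProduct] using congrFun (hΩ.mulVec_eq_zero_of_trace_mul_eq_zero hΩX l) i
  · exact finrank_span_pair_eq_two_of_posDef hB h.ne ((hdiag i).trans (hBA.1 i).symm)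
      ((hedge i j h).trans (hBA.2 i j h).symm) ((hdiag j).trans (hBA.1 j).symm)
end
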